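/- arXiv:2302.10165 — 6 statements merged into one kernel-verified Lean document; each statement's English description precedes it below -/
import Mathlib

section
/- Let N, n, L, m be positive integers with n ≤ N and such that Lm/N is an integer, and let A_1, …, A_m ⊆ [N] := {1,…,N} be subsets of size L such that every element of [N] belongs to exactly Lm/N of the sets A_i. Let M_n be the set of computational basis states of N qubits having exactly n qubits in state |1⟩. Then for every unit vector |ξ⟩ in the span of M_n, the averaged entanglement entropy satisfies (1/m) Σ_{i=1}^m S(ξ_{A_i}) ≤ H_b(n/N)·L, where ξ_{A_i} is the reduced density matrix of |ξ⟩⟨ξ| on the qubits in A_i. -/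
open MeasureTheory ProbabilityTheory Matrix Finset
open scoped Matrix ComplexOrder Classical

noncomputable section

/-- The Hilbert space basis of `N` qubits is indexed by `Fin N → Bool`. -/
abbrev QOp (N : ℕ) := Matrix (Fin N → Bool) (Fin N → Bool) ℂ

/-- Jordan–Wigner annihilation operator `a_j = Z^{⊗(j-1)} ⊗ |0⟩⟨1| ⊗ I`. -/
def aOp (N : ℕ) (j : Fin N) : QOp N := fun x y =>
  if x j = false ∧ y j = true ∧ ∀ i, i ≠ j → x i = y i then
    ∏ i ∈ Finset.univ.filter (fun i => i < j), (if y i then (-1 : ℂ) else 1)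
  else 0

/-- The vacuum state `|0…0⟩`. -/
def vac (N : ℕ) : (Fin N → Bool) → ℂ := fun x => if x = fun _ => false then 1 else 0

/-- `|φ_n⟩ = a_1† a_2† ⋯ a_n† |0⟩`. -/
def phiState (N n : ℕ) : (Fin N → Bool) → ℂ :=
  ((((List.finRange N).filter (fun j => decide (j.val < n))).map
    (fun j => (aOp N j)ᴴ)).prod) *ᵥ vac N

/-- Rank-one projector `|v⟩⟨v|`. -/
def outer (N : ℕ) (v : (Fin N → Bool) → ℂ) : QOp N := Matrix.vecMulVec v (star v)

/-- `H_SYK2 = Σ_{j,k} h_{jk} a_j† a_k`. -/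
def HSYK2 (N : ℕ) (h : Matrix (Fin N) (Fin N) ℂ) : QOp N :=
  ∑ j, ∑ k, h j k • ((aOp N j)ᴴ * aOp N k)

instance matrixMeasurableSpace {m n α : Type*} [MeasurableSpace α] :
    MeasurableSpace (Matrix m n α) := MeasurableSpace.pi

/-- The GUE measure on `N × N` complex matrices. -/
def gueMeasure (N : ℕ) : Measure (Matrix (Fin N) (Fin N) ℂ) :=
  Measure.map
    (fun p : (Fin N → ℝ) × (Fin N → Fin N → ℝ) × (Fin N → Fin N → ℝ) =>
      Matrix.of fun j k =>
        if j = k then (p.1 j : ℂ)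
        else if j < k then (p.2.1 j k : ℂ) + (p.2.2 j k : ℂ) * Complex.I
        else (p.2.1 k j : ℂ) - (p.2.2 k j : ℂ) * Complex.I)
    ((Measure.pi fun _ => gaussianReal 0 1).prod
      ((Measure.pi fun _ => Measure.pi fun _ => gaussianReal 0 (1/2)).prod
        (Measure.pi fun _ => Measure.pi fun _ => gaussianReal 0 (1/2))))

/-- Von Neumann entropy `S(ρ) = -tr(ρ ln ρ)` via eigenvalues (0 for non-Hermitian junk). -/
def vnEntropy {m : Type*} [Fintype m] [DecidableEq m] (ρ : Matrix m m ℂ) : ℝ :=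
  if hρ : ρ.IsHermitian then -∑ i, hρ.eigenvalues i * Real.log (hρ.eigenvalues i) else 0

/-- Rényi-2 entropy `S₂(ρ) = -ln tr(ρ²)`. -/
def renyi2 {m : Type*} [Fintype m] (ρ : Matrix m m ℂ) : ℝ := -Real.log ((ρ * ρ).trace.re)

/-- Rényi-α entropy. -/
def renyiEntropy {m : Type*} [Fintype m] [DecidableEq m] (α : ℝ) (ρ : Matrix m m ℂ) : ℝ :=
  if hρ : ρ.IsHermitian then
    if α = 1 then -∑ i, hρ.eigenvalues i * Real.log (hρ.eigenvalues i)
    else (1 - α)⁻¹ * Real.log (∑ i, hρ.eigenvalues i ^ α)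
  else 0

/-- Binary entropy function. -/
def binEntropy (x : ℝ) : ℝ := -x * Real.log x - (1 - x) * Real.log (1 - x)

/-- All eigenvalues (roots of the characteristic polynomial, with multiplicity) are distinct. -/
def NondegSpectrum {m : Type*} [Fintype m] [DecidableEq m] (M : Matrix m m ℂ) : Prop :=
  M.charpoly.roots.Nodup

/-- The spectrum has non-degenerate gaps. -/
def NondegGaps {m : Type*} [Fintype m] [DecidableEq m] (M : Matrix m m ℂ) : Prop :=
  M.charpoly.roots.Nodup ∧
  ∀ a ∈ M.charpoly.roots, ∀ b ∈ M.charpoly.roots, ∀ c ∈ M.charpoly.roots,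
    ∀ d ∈ M.charpoly.roots, a ≠ b → c ≠ d → a - b = c - d → a = c ∧ b = d

/-- The Jordan–Wigner image on modes `A` of the matrix unit `|y⟩⟨x|` of an `L`-mode system:
`(∏_{k : y_k = 1, increasing} a_{i_k}†) (∏_k a_{i_k} a_{i_k}†) (∏_{k : x_k = 1, decreasing} a_{i_k})`
where `i_1 < ⋯ < i_L` enumerates `A`. -/
def hatUnit (N L : ℕ) (ι : Fin L → Fin N) (y x : Fin L → Bool) : QOp N :=
  ((((List.finRange L).filter (fun k => y k)).map (fun k => (aOp N (ι k))ᴴ)).prod) *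
  (((List.finRange L).map (fun k => aOp N (ι k) * (aOp N (ι k))ᴴ)).prod) *
  (((((List.finRange L).filter (fun k => x k)).map (fun k => aOp N (ι k))).reverse).prod)

/-- The fermionic reduced density matrix of `ρ` on the set `A` of `L` modes, i.e. the unique
`2^L × 2^L` matrix with `tr(ρ_A X) = tr(ρ X̂)` for all polynomials `X` in the `L`-mode
creation/annihilation operators, `X̂` being the corresponding polynomial in `{a_j, a_j†}_{j ∈ A}`
(modes taken in increasing order). -/
def fermRDM (N L : ℕ) (A : Finset (Fin N)) (hA : A.card = L) (ρ : QOp N) :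
    Matrix (Fin L → Bool) (Fin L → Bool) ℂ :=
  fun x y => (ρ * hatUnit N L (fun k => A.orderEmbOfFin hA k) y x).trace

/-- Time evolution `e^{-iHt} v`. -/
def evolve (N : ℕ) (H : QOp N) (t : ℝ) (v : (Fin N → Bool) → ℂ) : (Fin N → Bool) → ℂ :=
  NormedSpace.exp ((-(t : ℂ) * Complex.I) • H) *ᵥ v

/-- Qubit partial trace onto the qubits in `A`. -/
def ptrace {N : ℕ} (A : Finset (Fin N)) (ρ : QOp N) :
    Matrix ({i // i ∈ A} → Bool) ({i // i ∈ A} → Bool) ℂ :=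
  fun x y => ∑ z : {i : Fin N // i ∉ A} → Bool,
    ρ (fun i => if h : i ∈ A then x ⟨i, h⟩ else z ⟨i, h⟩)
      (fun i => if h : i ∈ A then y ⟨i, h⟩ else z ⟨i, h⟩)


/-!
The diagonal of a Hermitian matrix is the image of its spectrum under the doubly stochastic
matrix `|U_{xj}|²` of its eigenvector unitary, so concavity of `-x log x` gives
`S(ξ_A) ≤ H(diag ξ_A)`, the Shannon entropy of measuring the qubits of `A` in the computational
basis. Subadditivity of Shannon entropy bounds this by `∑_{j ∈ A} H_b(q_j)`, where `q_j` is the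
probability of finding qubit `j` in `|1⟩`. Summed over the `A_i`, each qubit is counted `Lm/N`
times, and since `∑_j q_j = n`, concavity of `H_b` gives `∑_j H_b(q_j) ≤ N H_b(n/N)`.
-/

section DoublyStochastic

variable {n : Type*} [Fintype n] [DecidableEq n]

theorem ConcaveOn.sum_map_le_sum_map_mulVec {s : Set ℝ} {f : ℝ → ℝ} (hf : ConcaveOn ℝ s f)
    {M : Matrix n n ℝ} (hM : M ∈ doublyStochastic ℝ n) {x : n → ℝ} (hx : ∀ i, x i ∈ s) :
    ∑ i, f (x i) ≤ ∑ i, f ((M *ᵥ x) i) := by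
  have hrow (i : n) : ∑ j, M i j * f (x j) ≤ f ((M *ᵥ x) i) := by
    simpa [mulVec, dotProduct, smul_eq_mul] using
      hf.le_map_sum (t := univ) (fun j _ => nonneg_of_mem_doublyStochastic hM)
        (sum_row_of_mem_doublyStochastic hM i) (fun j _ => hx j)
  calc ∑ j, f (x j) = ∑ j, (∑ i, M i j) * f (x j) := by
        simp [sum_col_of_mem_doublyStochastic hM]
    _ = ∑ i, ∑ j, M i j * f (x j) := by simp only [sum_mul]; exact sum_comm
    _ ≤ ∑ i, f ((M *ᵥ x) i) := sum_le_sum fun i _ => hrow i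

theorem normSq_mem_doublyStochastic_of_mem_unitaryGroup {U : Matrix n n ℂ}
    (hU : U ∈ unitaryGroup n ℂ) :
    of (fun i j => Complex.normSq (U i j)) ∈ doublyStochastic ℝ n := by
  have hnormSq (z : ℂ) : (Complex.normSq z : ℂ) = z * star z := (Complex.mul_conj z).symm
  refine mem_doublyStochastic_iff_sum.2
    ⟨fun i j => Complex.normSq_nonneg _, fun i => ?_, fun j => ?_⟩
  · have h := congrFun₂ (mem_unitaryGroup_iff.1 hU) i i
    simp only [mul_apply, star_apply, one_apply_eq] at h
    exact_mod_cast (by simpa [hnormSq] using h : ((∑ j, Complex.normSq (U i j) : ℝ) : ℂ) = 1)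
  · have h := congrFun₂ (mem_unitaryGroup_iff'.1 hU) j j
    simp only [mul_apply, star_apply, one_apply_eq] at h
    exact_mod_cast
      (by simpa [hnormSq, mul_comm] using h : ((∑ i, Complex.normSq (U i j) : ℝ) : ℂ) = 1)

end DoublyStochastic

theorem ConcaveOn.sum_map_le_card_mul_map_average {ι : Type*} {s : Set ℝ} {f : ℝ → ℝ}
    (hf : ConcaveOn ℝ s f) {t : Finset ι} (ht : t.Nonempty) {x : ι → ℝ} (hx : ∀ i ∈ t, x i ∈ s) :
    ∑ i ∈ t, f (x i) ≤ #t * f ((∑ i ∈ t, x i) / #t) := by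
  have hcard : (0 : ℝ) < #t := by exact_mod_cast ht.card_pos
  have h := hf.le_map_sum (w := fun _ => (#t : ℝ)⁻¹) (fun _ _ => by positivity)
    (by simp [hcard.ne']) hx
  simp only [smul_eq_mul, ← mul_sum] at h
  rw [inv_mul_eq_div, inv_mul_eq_div, div_le_iff₀ hcard] at h
  linarith

theorem Matrix.IsHermitian.re_apply_self_eq_mulVec_eigenvalues {n : Type*} [Fintype n]
    [DecidableEq n] {A : Matrix n n ℂ} (hA : A.IsHermitian) (i : n) :
    (A i i).re =
      (of (fun i j => Complex.normSq (hA.eigenvectorUnitary i j)) *ᵥ hA.eigenvalues) i := by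
  set U : Matrix n n ℂ := (hA.eigenvectorUnitary : Matrix n n ℂ)
  have hentry : A i i = ∑ j, ((Complex.normSq (U i j) * hA.eigenvalues j : ℝ) : ℂ) := by
    conv_lhs => rw [hA.spectral_theorem]
    simp only [Unitary.conjStarAlgAut_apply, mul_apply, diagonal_apply, star_apply,
      Function.comp_apply, mul_ite, mul_zero, sum_ite_eq', mem_univ, if_true]
    refine sum_congr rfl fun j _ => ?_
    push_cast
    rw [← Complex.mul_conj]
    simp [U]
    ring
  rw [hentry, ← Complex.ofReal_sum, Complex.ofReal_re]
  rfl

theorem vnEntropy_le_sum_negMulLog_diag {n : Type*} [Fintype n] [DecidableEq n]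
    {ρ : Matrix n n ℂ} (hρ : ρ.PosSemidef) :
    vnEntropy ρ ≤ ∑ x, Real.negMulLog (ρ x x).re := by
  rw [vnEntropy, dif_pos hρ.1]
  simp only [hρ.1.re_apply_self_eq_mulVec_eigenvalues]
  calc -∑ j, hρ.1.eigenvalues j * Real.log (hρ.1.eigenvalues j)
      = ∑ j, Real.negMulLog (hρ.1.eigenvalues j) := by simp [Real.negMulLog, sum_neg_distrib]
    _ ≤ _ := Real.concaveOn_negMulLog.sum_map_le_sum_map_mulVec
        (normSq_mem_doublyStochastic_of_mem_unitaryGroup hρ.1.eigenvectorUnitary.2)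
        hρ.eigenvalues_nonneg

theorem Real.mul_log_le_mul_log_add_sub {p q : ℝ} (hp : 0 ≤ p) (hq : 0 ≤ q)
    (hpq : 0 < p → 0 < q) :
    p * Real.log q ≤ p * Real.log p + (q - p) := by
  rcases hp.eq_or_lt with rfl | hp
  · simpa using hq
  have hlog := Real.log_le_sub_one_of_pos (div_pos (hpq hp) hp)
  rw [Real.log_div (hpq hp).ne' hp.ne'] at hlog
  have := mul_le_mul_of_nonneg_left hlog hp.le
  rw [mul_sub, mul_sub, mul_div_cancel₀ _ hp.ne', mul_one] at this
  linarith

theorem sum_negMulLog_le_neg_sum_mul_log {ι : Type*} [Fintype ι] {p q : ι → ℝ}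
    (hp : ∀ y, 0 ≤ p y) (hq : ∀ y, 0 ≤ q y) (hpq : ∀ y, 0 < p y → 0 < q y)
    (hp1 : ∑ y, p y = 1) (hq1 : ∑ y, q y = 1) :
    ∑ y, Real.negMulLog (p y) ≤ -∑ y, p y * Real.log (q y) := by
  have := sum_le_sum fun y (_ : y ∈ univ) =>
    Real.mul_log_le_mul_log_add_sub (hp y) (hq y) (hpq y)
  simp only [sum_add_distrib, sum_sub_distrib, hp1, hq1, sub_self, add_zero] at this
  simp only [Real.negMulLog, neg_mul, sum_neg_distrib]
  linarith

def coordMarginal {ι β : Type*} [Fintype ι] [DecidableEq ι] [Fintype β] [DecidableEq β]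
    (P : (ι → β) → ℝ) (j : ι) (b : β) : ℝ :=
  ∑ x with x j = b, P x

section Marginal

variable {ι β : Type*} [Fintype ι] [DecidableEq ι] [Fintype β] [DecidableEq β]
  {P : (ι → β) → ℝ}

theorem sum_coordMarginal (P : (ι → β) → ℝ) (j : ι) : ∑ b, coordMarginal P j b = ∑ x, P x := by
  unfold coordMarginal
  exact sum_fiberwise univ (fun x => x j) P

theorem coordMarginal_nonneg (hP : ∀ x, 0 ≤ P x) (j : ι) (b : β) : 0 ≤ coordMarginal P j b := by
  unfold coordMarginal
  exact sum_nonneg fun x _ => hP x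

theorem le_coordMarginal (hP : ∀ x, 0 ≤ P x) (x : ι → β) (j : ι) :
    P x ≤ coordMarginal P j (x j) := by
  unfold coordMarginal
  exact single_le_sum (fun y _ => hP y) (by simp)

theorem sum_mul_log_prod_coordMarginal (hP : ∀ x, 0 ≤ P x) :
    ∑ x, P x * Real.log (∏ j, coordMarginal P j (x j)) =
      ∑ j, ∑ b, coordMarginal P j b * Real.log (coordMarginal P j b) := by
  calc ∑ x, P x * Real.log (∏ j, coordMarginal P j (x j))
      = ∑ x, ∑ j, P x * Real.log (coordMarginal P j (x j)) := by
        refine sum_congr rfl fun x _ => ?_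
        rcases (hP x).eq_or_lt with h0 | hpos
        · simp [← h0]
        · rw [Real.log_prod fun j _ => (hpos.trans_le (le_coordMarginal hP x j)).ne', mul_sum]
    _ = ∑ j, ∑ b, ∑ x with x j = b, P x * Real.log (coordMarginal P j (x j)) := by
        rw [sum_comm]
        exact sum_congr rfl fun j _ => (sum_fiberwise univ (fun x => x j)
          fun x => P x * Real.log (coordMarginal P j (x j))).symm
    _ = ∑ j, ∑ b, coordMarginal P j b * Real.log (coordMarginal P j b) := by
        refine sum_congr rfl fun j _ => sum_congr rfl fun b _ => ?_
        unfold coordMarginal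
        rw [sum_mul]
        exact sum_congr rfl fun x hx => by rw [(mem_filter.1 hx).2]

theorem sum_negMulLog_le_sum_sum_negMulLog_coordMarginal (hP : ∀ x, 0 ≤ P x)
    (hP1 : ∑ x, P x = 1) :
    ∑ x, Real.negMulLog (P x) ≤ ∑ j, ∑ b, Real.negMulLog (coordMarginal P j b) := by
  have hprod1 : ∑ x : ι → β, ∏ j, coordMarginal P j (x j) = 1 := by
    rw [← Fintype.prod_sum (fun j b => coordMarginal P j b)]
    simp [sum_coordMarginal, hP1]
  -- Gibbs' inequality against the product of the marginals
  have hgibbs := sum_negMulLog_le_neg_sum_mul_log hP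
    (fun x => prod_nonneg fun j _ => coordMarginal_nonneg hP j (x j))
    (fun x hx => prod_pos fun j _ => hx.trans_le (le_coordMarginal hP x j))
    hP1 hprod1
  rw [sum_mul_log_prod_coordMarginal hP] at hgibbs
  simpa [Real.negMulLog, sum_neg_distrib] using hgibbs

end Marginal

section Restriction

variable {ι β : Type*} [Fintype ι] [DecidableEq ι] [Fintype β] (A : Finset ι)

theorem sum_sum_piEquivPiSubtypeProd_symm (P : (ι → β) → ℝ) :
    ∑ y, ∑ z, P ((Equiv.piEquivPiSubtypeProd (· ∈ A) fun _ => β).symm (y, z)) = ∑ x, P x := by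
  rw [← Fintype.sum_prod_type']
  exact Equiv.sum_comp _ P

theorem coordMarginal_sum_piEquivPiSubtypeProd_symm [DecidableEq β] (P : (ι → β) → ℝ)
    (j : {i // i ∈ A}) (b : β) :
    coordMarginal
        (fun y => ∑ z, P ((Equiv.piEquivPiSubtypeProd (· ∈ A) fun _ => β).symm (y, z))) j b =
      coordMarginal P j b := by
  unfold coordMarginal
  rw [sum_filter, sum_filter, ← sum_sum_piEquivPiSubtypeProd_symm A]
  refine sum_congr rfl fun y _ => ?_
  have hj (z) : (Equiv.piEquivPiSubtypeProd (· ∈ A) fun _ => β).symm (y, z) j = y j := by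
    simp [j.2]
  split_ifs with h <;> simp [hj, h]

end Restriction

section PartialTrace

variable {N : ℕ} (A : Finset (Fin N)) (ξ : (Fin N → Bool) → ℂ)

theorem ptrace_outer_eq_sum_vecMulVec :
    ptrace A (outer N ξ) = ∑ z, vecMulVec
      (fun y => ξ ((Equiv.piEquivPiSubtypeProd (· ∈ A) fun _ => Bool).symm (y, z)))
      (star fun y => ξ ((Equiv.piEquivPiSubtypeProd (· ∈ A) fun _ => Bool).symm (y, z))) := by
  ext x y
  simp [ptrace, outer, Matrix.sum_apply, vecMulVec_apply, Equiv.piEquivPiSubtypeProd]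

theorem posSemidef_ptrace_outer : (ptrace A (outer N ξ)).PosSemidef := by
  rw [ptrace_outer_eq_sum_vecMulVec]
  exact posSemidef_sum _ fun z _ => posSemidef_vecMulVec_self_star _

theorem re_ptrace_outer_apply_self (y : {i // i ∈ A} → Bool) :
    (ptrace A (outer N ξ) y y).re =
      ∑ z, Complex.normSq (ξ ((Equiv.piEquivPiSubtypeProd (· ∈ A) fun _ => Bool).symm (y, z))) := by
  simp only [ptrace, outer, vecMulVec_apply, Pi.star_apply, Complex.star_def, Complex.mul_conj,
    Complex.re_sum, Complex.ofReal_re]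
  rfl

end PartialTrace

theorem binEntropy_eq_real_binEntropy (x : ℝ) : binEntropy x = Real.binEntropy x := by
  rw [binEntropy, Real.binEntropy_eq_negMulLog_add_negMulLog_one_sub, Real.negMulLog,
    Real.negMulLog]
  ring

section Qubits

variable {ι : Type*} [Fintype ι] [DecidableEq ι] {P : (ι → Bool) → ℝ}

theorem coordMarginal_mem_Icc (hP : ∀ x, 0 ≤ P x) (hP1 : ∑ x, P x = 1) (j : ι) :
    coordMarginal P j true ∈ Set.Icc 0 1 := by
  have h := sum_coordMarginal P j
  rw [Fintype.sum_bool, hP1] at h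
  exact ⟨coordMarginal_nonneg hP j true, by linarith [coordMarginal_nonneg hP j false]⟩

theorem sum_negMulLog_coordMarginal_eq_binEntropy (hP1 : ∑ x, P x = 1) (j : ι) :
    ∑ b, Real.negMulLog (coordMarginal P j b) = Real.binEntropy (coordMarginal P j true) := by
  have h := sum_coordMarginal P j
  rw [Fintype.sum_bool, hP1] at h
  rw [Fintype.sum_bool, Real.binEntropy_eq_negMulLog_add_negMulLog_one_sub, ← h,
    add_sub_cancel_left]

theorem sum_coordMarginal_true_eq {n : ℕ} (hP1 : ∑ x, P x = 1)
    (hsupp : ∀ x, #{i | x i = true} ≠ n → P x = 0) :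
    ∑ j, coordMarginal P j true = n := by
  have hcount (x : ι → Bool) : ∑ j, (if x j = true then P x else 0) = n * P x := by
    rw [← sum_filter, sum_const, nsmul_eq_mul]
    by_cases hx : #{i | x i = true} = n
    · rw [hx]
    · rw [hsupp x hx, mul_zero, mul_zero]
  unfold coordMarginal
  simp only [sum_filter]
  rw [sum_comm, sum_congr rfl fun x _ => hcount x, ← mul_sum, hP1, mul_one]

end Qubits

theorem vnEntropy_ptrace_outer_le_sum_binEntropy {N : ℕ} (A : Finset (Fin N))
    {ξ : (Fin N → Bool) → ℂ} (hξ : ∑ x, Complex.normSq (ξ x) = 1) :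
    vnEntropy (ptrace A (outer N ξ)) ≤
      ∑ j ∈ A, Real.binEntropy (coordMarginal (fun x => Complex.normSq (ξ x)) j true) := by
  set P : (Fin N → Bool) → ℝ := fun x => Complex.normSq (ξ x)
  set PA : ({i // i ∈ A} → Bool) → ℝ :=
    fun y => ∑ z, P ((Equiv.piEquivPiSubtypeProd (· ∈ A) fun _ => Bool).symm (y, z))
  have hPA1 : ∑ y, PA y = 1 := by rw [sum_sum_piEquivPiSubtypeProd_symm, hξ]
  calc vnEntropy (ptrace A (outer N ξ))
      ≤ ∑ y, Real.negMulLog (ptrace A (outer N ξ) y y).re :=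
        vnEntropy_le_sum_negMulLog_diag (posSemidef_ptrace_outer A ξ)
    _ = ∑ y, Real.negMulLog (PA y) := by simp only [re_ptrace_outer_apply_self, PA, P]
    _ ≤ ∑ j, ∑ b, Real.negMulLog (coordMarginal PA j b) :=
        sum_negMulLog_le_sum_sum_negMulLog_coordMarginal
          (fun y => sum_nonneg fun z _ => Complex.normSq_nonneg _) hPA1
    _ = ∑ j ∈ A, Real.binEntropy (coordMarginal P j true) := by
        simp only [PA, coordMarginal_sum_piEquivPiSubtypeProd_symm]
        rw [← sum_coe_sort A]
        exact sum_congr rfl fun j _ => sum_negMulLog_coordMarginal_eq_binEntropy hξ j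

theorem sum_sum_mem_eq_sum_card_nsmul {ι κ M : Type*} [Fintype ι] [Fintype κ] [DecidableEq κ]
    [AddCommMonoid M] (A : ι → Finset κ) (f : κ → M) :
    ∑ i, ∑ j ∈ A i, f j = ∑ j, #{i | j ∈ A i} • f j := by
  rw [sum_comm' (t' := univ) (s' := fun j => {i | j ∈ A i}) (by simp)]
  simp only [sum_const]

theorem averaged_entropy_upper_bound_general
    (N n L m : ℕ) (hN : 0 < N) (hm : 0 < m)
    (A : Fin m → Finset (Fin N))
    (hcover : ∀ j : Fin N, (Finset.univ.filter fun i => j ∈ A i).card * N = L * m)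
    (ξ : (Fin N → Bool) → ℂ)
    (hnorm : ∑ x, ‖ξ x‖ ^ 2 = 1)
    (hsupp : ∀ x : Fin N → Bool,
      (Finset.univ.filter fun i => x i = true).card ≠ n → ξ x = 0) :
    (1 / m : ℝ) * ∑ i, vnEntropy (ptrace (A i) (outer N ξ)) ≤
      binEntropy ((n : ℝ) / N) * L := by
  set P : (Fin N → Bool) → ℝ := fun x => Complex.normSq (ξ x)
  set q : Fin N → ℝ := fun j => coordMarginal P j true
  have hP1 : ∑ x, P x = 1 := by simpa [P, Complex.sq_norm] using hnorm
  have hq : ∑ j, q j = n :=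
    sum_coordMarginal_true_eq hP1 fun x hx => by simp [P, hsupp x hx]
  have hdeg (j : Fin N) : (#{i | j ∈ A i} : ℝ) = L * m / N := by
    rw [eq_div_iff (by positivity)]
    exact_mod_cast hcover j
  have hjensen : ∑ j, Real.binEntropy (q j) ≤ N * Real.binEntropy (n / N) := by
    have h := Real.strictConcave_binEntropy.concaveOn.sum_map_le_card_mul_map_average (x := q)
      (univ_nonempty_iff.2 ⟨⟨0, hN⟩⟩)
      fun j _ => coordMarginal_mem_Icc (fun x => Complex.normSq_nonneg _) hP1 j
    rwa [hq, card_univ, Fintype.card_fin] at h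
  calc (1 / m : ℝ) * ∑ i, vnEntropy (ptrace (A i) (outer N ξ))
      ≤ 1 / m * ∑ i, ∑ j ∈ A i, Real.binEntropy (q j) := by
        gcongr with i
        exact vnEntropy_ptrace_outer_le_sum_binEntropy (A i) hP1
    _ = L / N * ∑ j, Real.binEntropy (q j) := by
        simp only [sum_sum_mem_eq_sum_card_nsmul, nsmul_eq_mul, hdeg, ← mul_sum]
        field_simp
    _ ≤ L / N * (N * Real.binEntropy (n / N)) := by gcongr
    _ = binEntropy ((n : ℝ) / N) * L := by
        rw [binEntropy_eq_real_binEntropy]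
        field_simp

/-- Averaged entanglement entropy upper bound `(1/m) Σ S(ξ_{A_i}) ≤ H_b(n/N) L`
for a unit vector supported on computational basis states with exactly `n` qubits up,
where each qubit belongs to exactly `Lm/N` of the size-`L` subsets `A_i`. -/
theorem averaged_entropy_upper_bound
    (N n L m : ℕ) (hN : 0 < N) (hn : n ≤ N) (hL : 0 < L) (hm : 0 < m)
    (A : Fin m → Finset (Fin N)) (hA : ∀ i, (A i).card = L)
    (hcover : ∀ j : Fin N, (Finset.univ.filter fun i => j ∈ A i).card * N = L * m)
    (ξ : (Fin N → Bool) → ℂ)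
    (hnorm : ∑ x, ‖ξ x‖ ^ 2 = 1)
    (hsupp : ∀ x : Fin N → Bool,
      (Finset.univ.filter fun i => x i = true).card ≠ n → ξ x = 0) :
    (1 / m : ℝ) * ∑ i, vnEntropy (ptrace (A i) (outer N ξ)) ≤
      binEntropy ((n : ℝ) / N) * L :=
  averaged_entropy_upper_bound_general N n L m hN hm A hcover ξ hnorm hsupp
end
end

section
/- Let p, q, r, s ∈ {0,1}^N be binary row vectors of length N. If the N×N matrices satisfy pᵀp − qᵀq = rᵀr − sᵀs and this common matrix is not the zero matrix, then p = r and q = s. -/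
open Finset
open scoped Classical

noncomputable section

/-- If `pᵀp − qᵀq = rᵀr − sᵀs ≠ 0` for binary vectors, then `p = r` and `q = s`. -/
theorem outer_difference_rigidity (N : ℕ) (p q r s : Fin N → ℝ)
    (hp : ∀ i, p i = 0 ∨ p i = 1) (hq : ∀ i, q i = 0 ∨ q i = 1)
    (hr : ∀ i, r i = 0 ∨ r i = 1) (hs : ∀ i, s i = 0 ∨ s i = 1)
    (heq : Matrix.vecMulVec p p - Matrix.vecMulVec q q =
      Matrix.vecMulVec r r - Matrix.vecMulVec s s)
    (hne : Matrix.vecMulVec p p - Matrix.vecMulVec q q ≠ 0) :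
    p = r ∧ q = s := by
  have key : ∀ i j, p i * p j - q i * q j = r i * r j - s i * s j := by
    intro i j
    have := congrFun (congrFun heq i) j
    simpa [Matrix.vecMulVec_apply, Matrix.sub_apply] using this
  have hpq : ∃ i, p i ≠ q i := by
    by_contra h
    push_neg at h
    apply hne
    ext i j
    simp [Matrix.vecMulVec_apply, Matrix.sub_apply, h i, h j]
  obtain ⟨i0, hi0⟩ := hpq
  have idem : ∀ (v : Fin N → ℝ), (∀ i, v i = 0 ∨ v i = 1) → ∀ j, v j * v j = v j := by
    intro v hv j; rcases hv j with h | h <;> simp [h]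
  have hd := key i0 i0
  rw [idem p hp, idem q hq, idem r hr, idem s hs] at hd
  rcases hp i0 with h1 | h1 <;> rcases hq i0 with h2 | h2
  · exact absurd (h1.trans h2.symm) hi0
  · -- p i0 = 0, q i0 = 1; then r i0 = 0, s i0 = 1
    have h3 : r i0 = 0 := by
      rcases hr i0 with h | h
      · exact h
      · rcases hs i0 with h' | h' <;> rw [h1, h2, h, h'] at hd <;> norm_num at hd
    have h4 : s i0 = 1 := by
      rcases hs i0 with h | h
      · rw [h1, h2, h3, h] at hd; norm_num at hd
      · exact h
    have hqs : q = s := by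
      funext j
      have := key i0 j
      rw [h1, h2, h3, h4] at this
      linarith
    refine ⟨funext fun j => ?_, hqs⟩
    have hj := key j j
    rw [idem p hp, idem q hq, idem r hr, idem s hs] at hj
    have : q j = s j := by rw [hqs]
    linarith
  · -- p i0 = 1, q i0 = 0; then r i0 = 1, s i0 = 0
    have h3 : r i0 = 1 := by
      rcases hr i0 with h | h
      · rcases hs i0 with h' | h' <;> rw [h1, h2, h, h'] at hd <;> norm_num at hd
      · exact h
    have h4 : s i0 = 0 := by
      rcases hs i0 with h | h
      · exact h
      · rw [h1, h2, h3, h] at hd; norm_num at hd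
    have hpr : p = r := by
      funext j
      have := key i0 j
      rw [h1, h2, h3, h4] at this
      linarith
    refine ⟨hpr, funext fun j => ?_⟩
    have hj := key j j
    rw [idem p hp, idem q hq, idem r hr, idem s hs] at hj
    have : p j = r j := by rw [hpr]
    linarith
  · exact absurd (h1.trans h2.symm) hi0

end
end

section
/- Let {K_{jk}}_{1 ≤ j ≤ k ≤ N} be real numbers that are linearly independent over the rationals (equivalently, over the integers), and define E(v) := Σ_{1 ≤ j ≤ k ≤ N} K_{jk} v_j v_k for v ∈ {0,1}^N. Then the 2^N values {E(v)}_{v ∈ {0,1}^N} are pairwise distinct, and their differences are non-degenerate: for all p, q, r, s ∈ {0,1}^N, if E(p) − E(q) = E(r) − E(s) ≠ 0 then p = r and q = s. (Equivalently, the spectrum of the operator H_d := Σ_{1 ≤ j ≤ k ≤ N} K_{jk} a_j†a_j a_k†a_k, which is diagonal in the occupation basis with eigenvalue E(v) on the basis state with occupation vector v, has non-degenerate gaps.) -/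
open Finset
open scoped Classical

noncomputable section

lemma boolDiag (a b c d : Bool)
    (h : (if a then (1:ℚ) else 0) * (if a then 1 else 0)
          - (if b then 1 else 0) * (if b then 1 else 0)
       = (if c then 1 else 0) * (if c then 1 else 0)
          - (if d then 1 else 0) * (if d then 1 else 0)) :
    (a = b ∧ c = d) ∨ (a = c ∧ b = d ∧ a ≠ b) := by
  cases a <;> cases b <;> cases c <;> cases d <;> simp_all <;> norm_num at h

lemma boolDiag0 (a b : Bool)
    (h : (if a then (1:ℚ) else 0) * (if a then 1 else 0)
       = (if b then 1 else 0) * (if b then 1 else 0)) : a = b := by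
  cases a <;> cases b <;> simp_all <;> norm_num at h

lemma boolPair (a b x y : Bool) (hxy : x ≠ y)
    (h : (if a then (1:ℚ) else 0) * (if x then 1 else 0)
          - (if a then 1 else 0) * (if y then 1 else 0)
       = (if b then 1 else 0) * (if x then 1 else 0)
          - (if b then 1 else 0) * (if y then 1 else 0)) : a = b := by
  cases a <;> cases b <;> cases x <;> cases y <;> simp_all <;> norm_num at h

lemma boolPair' (a b x y : Bool) (hxy : x ≠ y)
    (h : (if x then (1:ℚ) else 0) * (if a then 1 else 0)
          - (if y then 1 else 0) * (if a then 1 else 0)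
       = (if x then 1 else 0) * (if b then 1 else 0)
          - (if y then 1 else 0) * (if b then 1 else 0)) : a = b := by
  cases a <;> cases b <;> cases x <;> cases y <;> simp_all <;> norm_num at h

/-- Rational coefficient of `K pq` in `E(v)`. -/
def qC (N : ℕ) (v : Fin N → Bool) (pq : {pq : Fin N × Fin N // pq.1 ≤ pq.2}) : ℚ :=
  (if v pq.1.1 then 1 else 0) * (if v pq.1.2 then 1 else 0)

def qE (N : ℕ) (K : {pq : Fin N × Fin N // pq.1 ≤ pq.2} → ℝ) (v : Fin N → Bool) : ℝ :=
  ∑ pq : {pq : Fin N × Fin N // pq.1 ≤ pq.2},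
    (if v pq.1.1 then (1:ℝ) else 0) * (if v pq.1.2 then (1:ℝ) else 0) * K pq

lemma qE_eq (N : ℕ) (K : {pq : Fin N × Fin N // pq.1 ≤ pq.2} → ℝ) (v : Fin N → Bool) :
    qE N K v = ∑ pq : {pq : Fin N × Fin N // pq.1 ≤ pq.2}, (qC N v pq : ℝ) * K pq := by
  refine Finset.sum_congr rfl fun pq _ => ?_
  unfold qC
  push_cast
  split_ifs <;> norm_num


theorem diag_aux (N : ℕ)
    (K : {pq : Fin N × Fin N // pq.1 ≤ pq.2} → ℝ)
    (hK : LinearIndependent ℚ K) :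
    Function.Injective (qE N K) ∧
    ∀ p q r s : Fin N → Bool,
      qE N K p - qE N K q = qE N K r - qE N K s →
      qE N K p - qE N K q ≠ 0 → p = r ∧ q = s := by
  classical
  have hli := Fintype.linearIndependent_iff.mp hK
  -- main coefficient extraction
  have main : ∀ p q r s : Fin N → Bool,
      qE N K p - qE N K q = qE N K r - qE N K s →
      ∀ pq, qC N p pq - qC N q pq = qC N r pq - qC N s pq := by
    intro p q r s hEq pq
    have h0 : ∑ i : {pq : Fin N × Fin N // pq.1 ≤ pq.2},
        ((qC N p i - qC N q i) - (qC N r i - qC N s i)) • K i = 0 := by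
      have hc : ∀ i : {pq : Fin N × Fin N // pq.1 ≤ pq.2},
          ((qC N p i - qC N q i) - (qC N r i - qC N s i)) • K i
          = ((qC N p i : ℝ) * K i - (qC N q i : ℝ) * K i)
            - ((qC N r i : ℝ) * K i - (qC N s i : ℝ) * K i) := by
        intro i
        rw [Rat.smul_def]
        push_cast
        ring
      rw [Finset.sum_congr rfl fun i _ => hc i, Finset.sum_sub_distrib,
        Finset.sum_sub_distrib, Finset.sum_sub_distrib,
        ← qE_eq, ← qE_eq, ← qE_eq, ← qE_eq]
      rw [hEq]; ring
    have := hli _ h0 pq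
    linarith [this]
  constructor
  · intro p q h
    have h' : qE N K p - qE N K q = qE N K q - qE N K q := by rw [h]
    have hcoef := main p q q q h'
    funext j
    have hd := hcoef ⟨(j, j), le_rfl⟩
    simp only [sub_self] at hd
    have hd' : qC N p ⟨(j, j), le_rfl⟩ = qC N q ⟨(j, j), le_rfl⟩ := by linarith
    exact boolDiag0 (p j) (q j) hd'
  · intro p q r s hEq hne0
    have hcoef := main p q r s hEq
    have hne : p ≠ q := by
      intro h; subst h; exact hne0 (sub_self _)
    obtain ⟨k, hk⟩ := Function.ne_iff.mp hne
    -- diagonal facts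
    have hdiag : ∀ j : Fin N, (p j = q j ∧ r j = s j) ∨ (p j = r j ∧ q j = s j ∧ p j ≠ q j) := by
      intro j
      exact boolDiag (p j) (q j) (r j) (s j) (hcoef ⟨(j, j), le_rfl⟩)
    have hkk : p k = r k ∧ q k = s k := by
      rcases hdiag k with ⟨h1, _⟩ | ⟨h1, h2, _⟩
      · exact absurd h1 hk
      · exact ⟨h1, h2⟩
    have key : ∀ j : Fin N, p j = r j ∧ q j = s j := by
      intro j
      rcases hdiag j with ⟨hj, hrs⟩ | ⟨h1, h2, _⟩
      · -- p j = q j, r j = s j; show p j = r j via pair (j,k)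
        have hpr : p j = r j := by
          rcases le_total j k with hjk | hkj
          · have hpq := hcoef ⟨(j, k), hjk⟩
            have hpq' : (if p j then (1:ℚ) else 0) * (if p k then 1 else 0)
                - (if q j then 1 else 0) * (if q k then 1 else 0)
                = (if r j then 1 else 0) * (if r k then 1 else 0)
                - (if s j then 1 else 0) * (if s k then 1 else 0) := hpq
            rw [← hj, ← hrs, ← hkk.1, ← hkk.2] at hpq'
            exact boolPair (p j) (r j) (p k) (q k) hk hpq'
          · have hpq := hcoef ⟨(k, j), hkj⟩
            have hpq' : (if p k then (1:ℚ) else 0) * (if p j then 1 else 0)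
                - (if q k then 1 else 0) * (if q j then 1 else 0)
                = (if r k then 1 else 0) * (if r j then 1 else 0)
                - (if s k then 1 else 0) * (if s j then 1 else 0) := hpq
            rw [← hj, ← hrs, ← hkk.1, ← hkk.2] at hpq'
            exact boolPair' (p j) (r j) (p k) (q k) hk hpq'
        exact ⟨hpr, by rw [← hj, ← hrs, hpr]⟩
      · exact ⟨h1, h2⟩
    exact ⟨funext fun j => (key j).1, funext fun j => (key j).2⟩


/-- For rationally independent couplings `K`, the quadratic energies
`E(v) = Σ_{j ≤ k} K_{jk} v_j v_k` on binary vectors are pairwise distinct and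
their differences are non-degenerate. -/
theorem diagonal_spectrum_nondegenerate_gaps (N : ℕ)
    (K : {pq : Fin N × Fin N // pq.1 ≤ pq.2} → ℝ)
    (hK : LinearIndependent ℚ K) :
    Function.Injective (fun v : Fin N → Bool =>
      ∑ pq : {pq : Fin N × Fin N // pq.1 ≤ pq.2},
        (if v pq.1.1 then (1:ℝ) else 0) * (if v pq.1.2 then (1:ℝ) else 0) * K pq) ∧
    ∀ p q r s : Fin N → Bool,
      (∑ pq : {pq : Fin N × Fin N // pq.1 ≤ pq.2},
          (if p pq.1.1 then (1:ℝ) else 0) * (if p pq.1.2 then (1:ℝ) else 0) * K pq)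
        - (∑ pq : {pq : Fin N × Fin N // pq.1 ≤ pq.2},
          (if q pq.1.1 then (1:ℝ) else 0) * (if q pq.1.2 then (1:ℝ) else 0) * K pq)
      = (∑ pq : {pq : Fin N × Fin N // pq.1 ≤ pq.2},
          (if r pq.1.1 then (1:ℝ) else 0) * (if r pq.1.2 then (1:ℝ) else 0) * K pq)
        - (∑ pq : {pq : Fin N × Fin N // pq.1 ≤ pq.2},
          (if s pq.1.1 then (1:ℝ) else 0) * (if s pq.1.2 then (1:ℝ) else 0) * K pq) →
      (∑ pq : {pq : Fin N × Fin N // pq.1 ≤ pq.2},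
          (if p pq.1.1 then (1:ℝ) else 0) * (if p pq.1.2 then (1:ℝ) else 0) * K pq)
        - (∑ pq : {pq : Fin N × Fin N // pq.1 ≤ pq.2},
          (if q pq.1.1 then (1:ℝ) else 0) * (if q pq.1.2 then (1:ℝ) else 0) * K pq) ≠ 0 →
      p = r ∧ q = s := by
  exact diag_aux N K hK

end
end

section
/- Fix an N×N Hermitian matrix h and a real number ε₂ ≠ 0. For almost every K = (K_{jk})_{1 ≤ j ≤ k ≤ N} ∈ ℝ^{N(N+1)/2} with respect to the product of standard Gaussian measures (equivalently, Lebesgue-almost every K), the spectrum of the 2^N × 2^N Hermitian matrix H_SYK2 + ε₂ H_d has non-degenerate gaps, where H_SYK2 := Σ_{j,k} h_{jk} a_j† a_k and H_d := Σ_{1 ≤ j ≤ k ≤ N} K_{jk} a_j†a_j a_k†a_k. -/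
open MeasureTheory ProbabilityTheory Matrix Finset
open scoped Matrix ComplexOrder Classical

noncomputable section

/-- Random density-density interaction `H_d = Σ_{j ≤ k} K_{jk} a_j†a_j a_k†a_k`. -/
def Hd (N : ℕ) (K : {pq : Fin N × Fin N // pq.1 ≤ pq.2} → ℝ) : QOp N :=
  ∑ pq : {pq : Fin N × Fin N // pq.1 ≤ pq.2},
    (K pq : ℂ) • ((aOp N pq.1.1)ᴴ * aOp N pq.1.1 * ((aOp N pq.1.2)ᴴ * aOp N pq.1.2))

/-!
A spectrum `E` has non-degenerate gaps iff `(E a - E b) - (E c - E d)` vanishes only on the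
trivial quadruples. These numbers are the eigenvalues of `gapMatrix (gapMatrix M)`, so the
condition says that `X ^ #trivialQuads` exactly divides its characteristic polynomial, i.e. that
one coefficient, `gapDiscriminant M`, is nonzero. For `M = H_SYK2 + ε₂ H_d(K)` this coefficient is
a polynomial in `K`, and the zero set of a nonzero polynomial is null for a product of atomless
measures; so it suffices to exhibit one good `K`.

`H_d(K)` is diagonal in the occupation basis, and for generic `K` its diagonal entries already
have non-degenerate gaps, since the pair occupations `n_j n_k` separate configurations. Then the
discriminant of `s H_SYK2 + ε₂ H_d(K)` is a nonzero polynomial in `s`, so it is nonzero at some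
real `s ≠ 0`, and dividing by `s` turns this into a good coupling `s⁻¹ K` for `H_SYK2 + ε₂ H_d`.
-/

section DistinctGaps

variable {β : Type*}

def DistinctGaps {R : Type*} [Add R] (E : β → R) : Prop :=
  ∀ a b c d, E a + E d = E b + E c → (a = b ∧ c = d) ∨ (a = c ∧ b = d)

theorem DistinctGaps.const_smul {R : Type*} [CommRing R] [IsDomain R] {E : β → R}
    (hE : DistinctGaps E) {c : R} (hc : c ≠ 0) : DistinctGaps (c • E) := fun a b c' d h =>
  hE a b c' d (mul_left_cancel₀ hc (by simpa only [Pi.smul_apply, smul_eq_mul, mul_add] using h))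

theorem nondegGaps_iff_distinctGaps [Fintype β] [DecidableEq β] {M : Matrix β β ℂ} {E : β → ℂ}
    (hM : M.charpoly.roots = univ.val.map E) : NondegGaps M ↔ DistinctGaps E := by
  rw [NondegGaps, hM, Multiset.nodup_map_iff_inj_on univ.nodup]
  simp only [Multiset.mem_map, Finset.mem_val, Finset.mem_univ, true_and, forall_exists_index,
    forall_apply_eq_imp_iff, true_implies]
  constructor
  · rintro ⟨hinj, hgap⟩ a b c d h
    by_cases hab : a = b
    · subst hab
      exact Or.inl ⟨rfl, hinj _ _ (add_left_cancel h).symm⟩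
    · have hcd : c ≠ d := by rintro rfl; exact hab (hinj _ _ (add_right_cancel h))
      have := hgap a b c d (fun h' => hab (hinj _ _ h')) (fun h' => hcd (hinj _ _ h'))
        (by linear_combination h)
      exact Or.inr ⟨hinj _ _ this.1, hinj _ _ this.2⟩
  · intro hE
    have hinj : ∀ a b, E a = E b → a = b := fun a b h => by
      rcases hE a b b b (by rw [h]) with ⟨hab, -⟩ | ⟨hab, -⟩ <;> exact hab
    refine ⟨hinj, fun a b c d hab _ h => ?_⟩
    rcases hE a b c d (by linear_combination h) with ⟨rfl, -⟩ | ⟨rfl, rfl⟩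
    · exact absurd rfl hab
    · exact ⟨rfl, rfl⟩

end DistinctGaps

section GapDiscriminant

open Polynomial
open scoped Kronecker

theorem Polynomial.coeff_prod_X_sub_C_ne_zero_iff {R α : Type*} [CommRing R] [IsDomain R]
    [Fintype α] (v : α → R) {T : Finset α} (hT : ∀ q ∈ T, v q = 0) :
    (∏ q, (X - C (v q))).coeff #T ≠ 0 ↔ ∀ q, v q = 0 → q ∈ T := by
  classical
  set S : Finset α := {q | v q = 0}
  have hTS : T ⊆ S := fun q hq => by simp [S, hT q hq]
  have hsplit : ∏ q, (X - C (v q)) = X ^ #S * ∏ q with v q ≠ 0, (X - C (v q)) := by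
    rw [← prod_filter_mul_prod_filter_not univ (fun q => v q = 0), ← prod_const]
    congr 1
    exact prod_congr rfl fun q hq => by simp [(mem_filter.1 hq).2]
  have hunit : (∏ q with v q ≠ 0, (X - C (v q))).coeff 0 ≠ 0 := by
    rw [coeff_zero_eq_eval_zero, eval_prod, prod_ne_zero_iff]
    simp +contextual
  rw [hsplit, coeff_X_pow_mul']
  constructor
  · intro h q hq
    split_ifs at h with hST
    · rw [eq_of_subset_of_card_le hTS hST]; simpa [S] using hq
    · exact absurd rfl h
  · intro h
    have hST : S = T := Subset.antisymm (fun q hq => h q (by simpa [S] using hq)) hTS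
    rw [hST, if_pos le_rfl, Nat.sub_self]
    exact hunit

variable {β R S : Type*} [DecidableEq β] [CommRing R] [CommRing S]

def gapMatrix (M : Matrix β β R) : Matrix (β × β) (β × β) R := M ⊗ₖ 1 - 1 ⊗ₖ M

theorem gapMatrix_map (M : Matrix β β R) (f : R →+* S) :
    (gapMatrix M).map f = gapMatrix (M.map f) := by
  ext ⟨i, j⟩ ⟨k, l⟩
  simp [gapMatrix, one_apply, apply_ite f]

theorem gapMatrix_diagonal (d : β → R) :
    gapMatrix (diagonal d) = diagonal fun p => d p.1 - d p.2 := by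
  rw [gapMatrix, ← diagonal_one, diagonal_kronecker_diagonal, diagonal_kronecker_diagonal,
    ← diagonal_sub]
  simp

variable [Fintype β]

theorem gapMatrix_conj {U V : Matrix β β R} (hUV : U * V = 1) (M : Matrix β β R) :
    gapMatrix (U * M * V) = (U ⊗ₖ U) * gapMatrix M * (V ⊗ₖ V) := by
  have h1 : (1 : Matrix β β R) = U * 1 * V := by rw [Matrix.mul_one, hUV]
  rw [gapMatrix, gapMatrix, Matrix.mul_sub, Matrix.sub_mul, ← mul_kronecker_mul,
    ← mul_kronecker_mul, ← mul_kronecker_mul, ← mul_kronecker_mul, ← h1]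

theorem kronecker_mul_kronecker_eq_one {U V : Matrix β β R} (hUV : U * V = 1) :
    (U ⊗ₖ U) * (V ⊗ₖ V) = 1 := by
  rw [← mul_kronecker_mul, hUV, one_kronecker_one]

theorem Matrix.charpoly_conj {U V : Matrix β β R} (hUV : U * V = 1) (M : Matrix β β R) :
    (U * M * V).charpoly = M.charpoly := by
  rw [charpoly_mul_comm, ← Matrix.mul_assoc, mul_eq_one_comm.1 hUV, Matrix.one_mul]

variable (β) in
def trivialQuads : Finset ((β × β) × (β × β)) :=
  {q | (q.1.1 = q.1.2 ∧ q.2.1 = q.2.2) ∨ (q.1.1 = q.2.1 ∧ q.1.2 = q.2.2)}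

def gapDiscriminant (M : Matrix β β R) : R :=
  (gapMatrix (gapMatrix M)).charpoly.coeff #(trivialQuads β)

theorem gapDiscriminant_map (M : Matrix β β R) (f : R →+* S) :
    gapDiscriminant (M.map f) = f (gapDiscriminant M) := by
  rw [gapDiscriminant, gapDiscriminant, ← gapMatrix_map, ← gapMatrix_map, charpoly_map, coeff_map]

theorem gapDiscriminant_conj_diagonal_ne_zero_iff [IsDomain R] {U V : Matrix β β R}
    (hUV : U * V = 1) (E : β → R) :
    gapDiscriminant (U * diagonal E * V) ≠ 0 ↔ DistinctGaps E := by
  rw [gapDiscriminant, gapMatrix_conj hUV, gapMatrix_conj (kronecker_mul_kronecker_eq_one hUV),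
    Matrix.charpoly_conj (kronecker_mul_kronecker_eq_one (kronecker_mul_kronecker_eq_one hUV)),
    gapMatrix_diagonal, gapMatrix_diagonal, charpoly_diagonal,
    coeff_prod_X_sub_C_ne_zero_iff _ fun q hq => ?_]
  · constructor
    · intro h a b c d hsum
      simpa [trivialQuads] using h ((a, b), (c, d)) (by linear_combination hsum)
    · rintro hE ⟨⟨a, b⟩, ⟨c, d⟩⟩ hq
      simpa [trivialQuads] using hE a b c d (by linear_combination hq)
  · rcases (mem_filter.1 hq).2 with ⟨h1, h2⟩ | ⟨h1, h2⟩ <;> simp [h1, h2]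

theorem gapDiscriminant_diagonal_ne_zero_iff [IsDomain R] (E : β → R) :
    gapDiscriminant (diagonal E) ≠ 0 ↔ DistinctGaps E := by
  simpa using gapDiscriminant_conj_diagonal_ne_zero_iff (Matrix.mul_one (1 : Matrix β β R)) E

theorem finite_setOf_gapDiscriminant_smul_add_eq_zero [IsDomain R] (A : Matrix β β R)
    {B : Matrix β β R} (hB : gapDiscriminant B ≠ 0) :
    {s : R | gapDiscriminant (s • A + B) = 0}.Finite := by
  set q : R[X] := gapDiscriminant ((X : R[X]) • A.map C + B.map C)
  have hq : ∀ s, q.eval s = gapDiscriminant (s • A + B) := fun s => by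
    rw [← coe_evalRingHom, ← gapDiscriminant_map]
    congr 1
    ext i j
    simp only [map_apply, Matrix.add_apply, Matrix.smul_apply, coe_evalRingHom, eval_add, eval_mul,
      eval_C, eval_X, smul_eq_mul]
  have hq0 : q ≠ 0 := fun h0 => hB (by simpa [h0] using (hq 0).symm)
  exact (finite_setOfPred_isRoot hq0).subset fun s hs => by simpa [hq] using hs

end GapDiscriminant

section Hermitian

variable {β : Type*} [Fintype β] [DecidableEq β] {M : Matrix β β ℂ}

theorem Complex.isSelfAdjoint_ofReal (c : ℝ) : IsSelfAdjoint (c : ℂ) := Complex.conj_ofReal c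

theorem Matrix.IsHermitian.gapDiscriminant_smul_ne_zero_iff (hM : M.IsHermitian) (c : ℂ) :
    gapDiscriminant (c • M) ≠ 0 ↔ DistinctGaps (c • (RCLike.ofReal ∘ hM.eigenvalues : β → ℂ)) := by
  have hspec := hM.spectral_theorem
  rw [Unitary.conjStarAlgAut_apply] at hspec
  conv_lhs => rw [hspec, ← Matrix.smul_mul, ← Matrix.mul_smul, ← diagonal_smul]
  exact gapDiscriminant_conj_diagonal_ne_zero_iff
    (Matrix.mem_unitaryGroup_iff.1 hM.eigenvectorUnitary.2) _

theorem Matrix.IsHermitian.nondegGaps_iff (hM : M.IsHermitian) :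
    NondegGaps M ↔ gapDiscriminant M ≠ 0 := by
  have h1 := hM.gapDiscriminant_smul_ne_zero_iff 1
  rw [one_smul, one_smul] at h1
  rw [h1, nondegGaps_iff_distinctGaps hM.roots_charpoly_eq_eigenvalues]

theorem Matrix.IsHermitian.nondegGaps_ofReal_smul (hM : M.IsHermitian) {c : ℝ} (hc : c ≠ 0)
    (h : NondegGaps M) : NondegGaps ((c : ℂ) • M) := by
  rw [(hM.smul (Complex.isSelfAdjoint_ofReal c)).nondegGaps_iff,
    hM.gapDiscriminant_smul_ne_zero_iff]
  rw [nondegGaps_iff_distinctGaps hM.roots_charpoly_eq_eigenvalues] at h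
  exact h.const_smul (Complex.ofReal_ne_zero.2 hc)

end Hermitian

section PolynomialNullSets

open MvPolynomial

theorem MvPolynomial.ae_eval_ofReal_ne_zero_fin {n : ℕ} (μ : Fin n → Measure ℝ)
    [∀ i, SigmaFinite (μ i)] [∀ i, NullSingletonClass (μ i)] {P : MvPolynomial (Fin n) ℂ}
    (hP : P ≠ 0) : ∀ᵐ x ∂Measure.pi μ, eval (fun i => (x i : ℂ)) P ≠ 0 := by
  induction n with
  | zero =>
    rw [eq_C_of_isEmpty P] at hP ⊢
    exact .of_forall fun x => by simpa using hP
  | succ n ih =>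
    set eP := finSuccEquiv ℂ n P
    have heP : eP ≠ 0 := by simpa [eP] using hP
    have hfin : {y : ℝ | eP.eval (C (y : ℂ)) = 0}.Finite :=
      (Polynomial.finite_setOfPred_isRoot heP).preimage
        ((C_injective _ _).comp Complex.ofReal_injective).injOn
    -- Fubini: off the finitely many roots `y` of `eP`, fixing `x₀ = y` leaves a nonzero polynomial
    have hprod : ∀ᵐ z ∂(μ 0).prod (Measure.pi fun j => μ (Fin.succ j)),
        eval (Fin.cons (z.1 : ℂ) fun j => (z.2 j : ℂ)) P ≠ 0 := by
      have hcont : Continuous fun z : ℝ × (Fin n → ℝ) =>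
          eval (Fin.cons (z.1 : ℂ) fun j => (z.2 j : ℂ)) P :=
        P.continuous_eval.comp <|
          (by fun_prop : Continuous fun z : ℝ × (Fin n → ℝ) => (z.1 : ℂ)).finCons (by fun_prop)
      rw [Measure.ae_prod_iff_ae_ae (isOpen_ne_fun hcont continuous_const).measurableSet]
      filter_upwards [hfin.countable.ae_notMem (μ 0)] with y hy
      filter_upwards [ih (fun j => μ j.succ) hy] with s hs
      rwa [eval_eq_eval_mv_eval', Polynomial.eval_map, ← eval_C (f := fun j => (s j : ℂ)) (y : ℂ),
        Polynomial.eval₂_at_apply]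
    filter_upwards [(measurePreserving_piFinSuccAbove μ 0).quasiMeasurePreserving.ae hprod]
      with x hx
    rwa [← Fin.cons_self_tail fun i => (x i : ℂ)]

theorem MvPolynomial.ae_eval_ofReal_ne_zero {ι : Type*} [Fintype ι] (μ : ι → Measure ℝ)
    [∀ i, SigmaFinite (μ i)] [∀ i, NullSingletonClass (μ i)] {P : MvPolynomial ι ℂ}
    (hP : P ≠ 0) : ∀ᵐ x ∂Measure.pi μ, eval (fun i => (x i : ℂ)) P ≠ 0 := by
  let e := Fintype.equivFin ι
  have hmp := (measurePreserving_piCongrLeft μ e.symm).symm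
  filter_upwards [hmp.quasiMeasurePreserving.ae (ae_eval_ofReal_ne_zero_fin _
    ((rename_injective _ e.injective).ne hP))] with x hx
  simpa [eval_rename, Function.comp_def, MeasurableEquiv.piCongrLeft] using hx

end PolynomialNullSets

section Fermions

variable {N : ℕ}

theorem aOp_apply (j : Fin N) (x y : Fin N → Bool) :
    aOp N j x y = if x = Function.update y j false ∧ y j = true then
      ∏ i with i < j, (if y i then (-1 : ℂ) else 1) else 0 := by
  rw [aOp]
  congr 1
  simp only [funext_iff, Function.update_apply]
  grind

theorem conjTranspose_aOp_mul_aOp (j : Fin N) :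
    (aOp N j)ᴴ * aOp N j = diagonal fun x => ((x j).toNat : ℂ) := by
  ext x y
  rw [mul_apply, sum_eq_single (Function.update x j false)
    (fun z _ hz => by simp [aOp_apply, hz]) (by simp)]
  simp only [conjTranspose_apply, aOp_apply, true_and]
  rcases eq_or_ne x y with rfl | hxy
  · rw [diagonal_apply_eq]
    cases hxj : x j
    · simp
    · simp only [and_self, if_true, star_prod, ← prod_mul_distrib, Bool.toNat_true, Nat.cast_one]
      exact prod_eq_one fun i _ => by split_ifs <;> simp
  · rw [diagonal_apply_ne _ hxy]
    by_cases hxj : x j = true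
    · have hne : ¬(Function.update x j false = Function.update y j false ∧ y j = true) := by
        rintro ⟨hu, hyj⟩
        refine hxy (funext fun i => ?_)
        have := congrFun hu i
        by_cases hij : i = j <;> simp_all
      simp [hne]
    · simp [hxj]

abbrev ModePair (N : ℕ) := {pq : Fin N × Fin N // pq.1 ≤ pq.2}

def densityEnergy (K : ModePair N → ℝ) (x : Fin N → Bool) : ℂ :=
  ∑ pq, (K pq : ℂ) * ((x pq.1.1).toNat * (x pq.1.2).toNat)

theorem Hd_eq_diagonal (K : ModePair N → ℝ) : Hd N K = diagonal (densityEnergy K) := by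
  ext x y
  by_cases hxy : x = y
  · subst hxy
    simp [Hd, densityEnergy, conjTranspose_aOp_mul_aOp, Matrix.sum_apply]
  · simp [Hd, conjTranspose_aOp_mul_aOp, Matrix.sum_apply, hxy]

theorem Hd_smul (c : ℝ) (K : ModePair N → ℝ) : Hd N (c • K) = (c : ℂ) • Hd N K := by
  simp only [Hd, smul_sum, smul_smul, Pi.smul_apply, smul_eq_mul, Complex.ofReal_mul]

theorem isHermitian_Hd (K : ModePair N → ℝ) : (Hd N K).IsHermitian := by
  rw [Hd_eq_diagonal]
  refine isHermitian_diagonal_of_self_adjoint _ (funext fun x => ?_)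
  simp [densityEnergy]

theorem isHermitian_HSYK2 {h : Matrix (Fin N) (Fin N) ℂ} (hh : h.IsHermitian) :
    (HSYK2 N h).IsHermitian := by
  rw [IsHermitian, HSYK2, conjTranspose_sum, sum_comm]
  refine sum_congr rfl fun k _ => ?_
  rw [conjTranspose_sum]
  refine sum_congr rfl fun j _ => ?_
  rw [conjTranspose_smul, conjTranspose_mul, conjTranspose_conjTranspose, ← hh.apply j k]

end Fermions

section GenericCouplings

theorem Bool.eq_and_eq_of_toNat_mul_add_eq (a₀ b₀ c₀ d₀ a b c d : Bool) (hab₀ : a₀ ≠ b₀)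
    (h₀₀ : a₀.toNat * a₀.toNat + d₀.toNat * d₀.toNat = b₀.toNat * b₀.toNat + c₀.toNat * c₀.toNat)
    (h₀ : a₀.toNat * a.toNat + d₀.toNat * d.toNat = b₀.toNat * b.toNat + c₀.toNat * c.toNat)
    (h : a.toNat * a.toNat + d.toNat * d.toNat = b.toNat * b.toNat + c.toNat * c.toNat) :
    a = c ∧ b = d := by
  revert a₀ b₀ c₀ d₀ a b c d
  decide

theorem eq_and_eq_or_eq_and_eq_of_pair_occupations {α : Type*} [LinearOrder α]
    {a b c d : α → Bool}
    (h : ∀ j k, j ≤ k → (a j).toNat * (a k).toNat + (d j).toNat * (d k).toNat =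
      (b j).toNat * (b k).toNat + (c j).toNat * (c k).toNat) :
    (a = b ∧ c = d) ∨ (a = c ∧ b = d) := by
  have h' : ∀ j k, (a j).toNat * (a k).toNat + (d j).toNat * (d k).toNat =
      (b j).toNat * (b k).toNat + (c j).toNat * (c k).toNat := fun j k =>
    (le_total j k).elim (h j k) fun hkj => by simpa only [mul_comm] using h k j hkj
  by_cases hab : a = b
  · subst hab
    refine Or.inl ⟨rfl, funext fun j => ?_⟩
    have := h' j j
    revert this
    cases a j <;> cases c j <;> cases d j <;> decide
  · -- at a mode `j₀` where `a` and `b` differ, the pairs `(j₀, k)` force `a k = c k`, `b k = d k`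
    obtain ⟨j₀, hj₀⟩ := Function.ne_iff.1 hab
    have key := fun k => Bool.eq_and_eq_of_toNat_mul_add_eq _ _ _ _ _ _ _ _ hj₀ (h' j₀ j₀)
      (h' j₀ k) (h' k k)
    exact Or.inr ⟨funext fun k => (key k).1, funext fun k => (key k).2⟩

variable {N : ℕ}

open MvPolynomial in
def densityEnergyPoly (x : Fin N → Bool) : MvPolynomial (ModePair N) ℂ :=
  ∑ pq, ((x pq.1.1).toNat * (x pq.1.2).toNat) • X pq

theorem eval_densityEnergyPoly (K : ModePair N → ℝ) (x : Fin N → Bool) :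
    MvPolynomial.eval (fun pq => (K pq : ℂ)) (densityEnergyPoly x) = densityEnergy K x := by
  simp [densityEnergyPoly, densityEnergy, mul_comm]

theorem ae_distinctGaps_densityEnergy (μ : ModePair N → Measure ℝ) [∀ pq, SigmaFinite (μ pq)]
    [∀ pq, NullSingletonClass (μ pq)] : ∀ᵐ K ∂Measure.pi μ, DistinctGaps (densityEnergy K) := by
  have hL : ∀ q ∉ trivialQuads (Fin N → Bool), densityEnergyPoly q.1.1 + densityEnergyPoly q.2.2 -
      densityEnergyPoly q.1.2 - densityEnergyPoly q.2.1 ≠ 0 := by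
    rintro ⟨⟨a, b⟩, c, d⟩ hq hL
    apply hq
    simp only [trivialQuads, mem_filter, mem_univ, true_and]
    refine eq_and_eq_or_eq_and_eq_of_pair_occupations fun j k hjk => ?_
    have := congrArg (MvPolynomial.eval (Pi.single ⟨(j, k), hjk⟩ 1)) hL
    simp [densityEnergyPoly, Pi.single_apply] at this
    apply Nat.cast_injective (R := ℂ)
    push_cast
    linear_combination this
  filter_upwards [ae_all_iff.2 fun q : {q // q ∉ trivialQuads (Fin N → Bool)} =>
    MvPolynomial.ae_eval_ofReal_ne_zero μ (hL q q.2)] with K hK a b c d hsum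
  by_contra hq
  refine hK ⟨((a, b), (c, d)), by simpa [trivialQuads] using hq⟩ ?_
  simp only [map_sub, map_add, eval_densityEnergyPoly]
  linear_combination hsum

end GenericCouplings

section Perturbation

variable {N : ℕ}

theorem exists_mvPolynomial_eval_eq_gapDiscriminant_add_smul_Hd (A : QOp N) (c : ℂ) :
    ∃ P : MvPolynomial (ModePair N) ℂ, ∀ K,
      MvPolynomial.eval (fun pq => (K pq : ℂ)) P = gapDiscriminant (A + c • Hd N K) := by
  refine ⟨gapDiscriminant (A.map MvPolynomial.C +
    (MvPolynomial.C c : MvPolynomial (ModePair N) ℂ) • diagonal densityEnergyPoly), fun K => ?_⟩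
  rw [← gapDiscriminant_map]
  congr 1
  ext x y
  by_cases hxy : x = y
  · subst hxy
    simp [Hd_eq_diagonal, eval_densityEnergyPoly]
  · simp [Hd_eq_diagonal, hxy]

theorem exists_nondegGaps_add_smul_Hd {A : QOp N} (hA : A.IsHermitian) {ε : ℝ} (hε : ε ≠ 0) :
    ∃ K, NondegGaps (A + (ε : ℂ) • Hd N K) := by
  have : NullSingletonClass (gaussianReal 0 1) := nullSingletonClass_gaussianReal one_ne_zero
  obtain ⟨K₀, hK₀⟩ := (ae_distinctGaps_densityEnergy fun _ : ModePair N => gaussianReal 0 1).exists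
  have hB : gapDiscriminant ((ε : ℂ) • Hd N K₀) ≠ 0 := by
    rw [Hd_eq_diagonal, ← diagonal_smul, gapDiscriminant_diagonal_ne_zero_iff]
    exact hK₀.const_smul (Complex.ofReal_ne_zero.2 hε)
  obtain ⟨s, hs⟩ := (((finite_setOf_gapDiscriminant_smul_add_eq_zero A hB).preimage
    Complex.ofReal_injective.injOn).union (Set.finite_singleton 0)).infinite_compl.nonempty
  simp only [Set.mem_compl_iff, Set.mem_union, Set.mem_preimage, Set.mem_ofPred_eq,
    Set.mem_singleton_iff, not_or] at hs
  have hherm : ((s : ℂ) • A + (ε : ℂ) • Hd N K₀).IsHermitian :=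
    (hA.smul (Complex.isSelfAdjoint_ofReal s)).add
      ((isHermitian_Hd K₀).smul (Complex.isSelfAdjoint_ofReal ε))
  refine ⟨s⁻¹ • K₀, ?_⟩
  convert hherm.nondegGaps_ofReal_smul (inv_ne_zero hs.2) (hherm.nondegGaps_iff.2 hs.1) using 1
  rw [Hd_smul, Complex.ofReal_inv, smul_add, inv_smul_smul₀ (Complex.ofReal_ne_zero.2 hs.2),
    smul_smul, smul_smul, mul_comm]

end Perturbation

/-- For fixed Hermitian `h` and `ε₂ ≠ 0`, for almost every Gaussian `K`
the spectrum of `H_SYK2 + ε₂ H_d` has non-degenerate gaps. -/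
theorem syk2_plus_density_nondegenerate_gaps (N : ℕ)
    (h : Matrix (Fin N) (Fin N) ℂ) (hh : h.IsHermitian) (ε₂ : ℝ) (hε : ε₂ ≠ 0) :
    ∀ᵐ K ∂(Measure.pi fun _ : {pq : Fin N × Fin N // pq.1 ≤ pq.2} => gaussianReal 0 1),
      NondegGaps (HSYK2 N h + (ε₂ : ℂ) • Hd N K) := by
  have : NullSingletonClass (gaussianReal 0 1) := nullSingletonClass_gaussianReal one_ne_zero
  have hherm : ∀ K, (HSYK2 N h + (ε₂ : ℂ) • Hd N K).IsHermitian := fun K =>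
    (isHermitian_HSYK2 hh).add ((isHermitian_Hd K).smul (Complex.isSelfAdjoint_ofReal ε₂))
  obtain ⟨P, hP⟩ := exists_mvPolynomial_eval_eq_gapDiscriminant_add_smul_Hd (HSYK2 N h) ε₂
  obtain ⟨K₁, hK₁⟩ := exists_nondegGaps_add_smul_Hd (isHermitian_HSYK2 hh) hε
  have hP0 : P ≠ 0 := by
    rintro rfl
    exact (hherm K₁).nondegGaps_iff.1 hK₁ (by rw [← hP, map_zero])
  filter_upwards [MvPolynomial.ae_eval_ofReal_ne_zero _ hP0] with K hK
  exact (hherm K).nondegGaps_iff.2 (hP K ▸ hK)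

end
end

section
/- Let H be a D×D Hermitian matrix whose spectrum has non-degenerate gaps, with eigenvalues E_1, …, E_D and orthonormal eigenbasis |1⟩, …, |D⟩. Let |φ⟩ ∈ ℂ^D be a unit vector, set c_j := ⟨j|φ⟩, D_eff := (Σ_j |c_j|⁴)^{−1}, and |φ(t)⟩ := e^{−iHt}|φ⟩. Then for every D×D complex matrix B, with B̄ := Σ_j |c_j|² ⟨j|B|j⟩, the limit ΔB := lim_{τ→∞} (1/τ) ∫₀^τ |⟨φ(t)|B|φ(t)⟩ − B̄|² dt exists and satisfies ΔB ≤ ‖B‖² / D_eff, where ‖B‖ is the operator norm. -/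
open MeasureTheory ProbabilityTheory Matrix Finset
open scoped Matrix ComplexOrder Classical

noncomputable section

/-- Operator (ℓ²→ℓ²) norm of a matrix. -/
def opNorm {m : Type*} [Fintype m] [DecidableEq m] (B : Matrix m m ℂ) : ℝ :=
  ‖(Matrix.toEuclideanCLM (𝕜 := ℂ) B : EuclideanSpace ℂ m →L[ℂ] EuclideanSpace ℂ m)‖

/-!
In the eigenbasis, `φ(t) = ∑ⱼ e^{-iEⱼt} cⱼ |j⟩`, so the fluctuation `⟨φ(t)|B|φ(t)⟩ - B̄` is the
trigonometric polynomial `∑_{j ≠ k} c̄ⱼ cₖ Bⱼₖ e^{i(Eⱼ - Eₖ)t}`. Non-degenerate gaps make its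
frequencies pairwise distinct, so in the time average of its squared modulus every cross term
averages out, leaving `∑_{j ≠ k} |cⱼ|² |cₖ|² |Bⱼₖ|²`. With `|cⱼ|²|cₖ|² ≤ (|cⱼ|⁴ + |cₖ|⁴) / 2` and
the fact that every row and column of `B` in an orthonormal basis has squared length at most
`‖B‖²`, this is at most `‖B‖² ∑ⱼ |cⱼ|⁴`.
-/

open Filter Topology Complex ComplexConjugate

theorem tendsto_average_exp_mul_I (δ : ℝ) :
    Tendsto (fun τ : ℝ => (τ : ℂ)⁻¹ * ∫ t in (0:ℝ)..τ, exp (δ * t * I)) atTop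
      (𝓝 (if δ = 0 then 1 else 0)) := by
  split_ifs with hδ
  · refine tendsto_const_nhds.congr' ?_
    filter_upwards [eventually_ne_atTop 0] with τ hτ
    simp [hδ, hτ]
  · have hc : (δ : ℂ) * I ≠ 0 := by simp [hδ]
    have hbound : ∀ τ : ℝ, 0 < τ →
        ‖(τ : ℂ)⁻¹ * ∫ t in (0:ℝ)..τ, exp (δ * t * I)‖ ≤ 2 / |δ| * τ⁻¹ := by
      intro τ hτ
      simp_rw [mul_right_comm _ _ I]
      rw [integral_exp_mul_complex hc, norm_mul, norm_div, norm_inv, norm_real,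
        Real.norm_of_nonneg hτ.le, norm_mul, norm_real, norm_I, mul_one, Real.norm_eq_abs]
      have hnum : ‖exp (δ * I * τ) - exp (δ * I * (0 : ℝ))‖ ≤ 2 := by
        refine (norm_sub_le _ _).trans ?_
        simp [norm_exp]
        norm_num
      rw [mul_comm]
      gcongr
    refine squeeze_zero_norm' ?_ (by simpa using tendsto_inv_atTop_zero.const_mul (2 / |δ|))
    filter_upwards [eventually_gt_atTop 0] with τ hτ using hbound τ hτ

theorem tendsto_average_sum_exp {ι : Type*} (s : Finset ι) (z : ι → ℂ) (ω : ι → ℝ) :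
    Tendsto (fun τ : ℝ => (τ : ℂ)⁻¹ * ∫ t in (0:ℝ)..τ, ∑ p ∈ s, z p * exp (ω p * t * I))
      atTop (𝓝 (∑ p ∈ s with ω p = 0, z p)) := by
  have hcont (p : ι) : Continuous fun t : ℝ => z p * exp (ω p * t * I) := by fun_prop
  simp_rw [intervalIntegral.integral_finsetSum fun p _ => (hcont p).intervalIntegrable 0 _,
    intervalIntegral.integral_const_mul, Finset.mul_sum, Finset.sum_filter]
  refine tendsto_finsetSum _ fun p _ => ?_
  simpa [mul_left_comm _ (z p)] using (tendsto_average_exp_mul_I (ω p)).const_mul (z p)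

theorem ofReal_norm_sq_sum_exp {ι : Type*} (s : Finset ι) (z : ι → ℂ) (ω : ι → ℝ) (t : ℝ) :
    ((‖∑ p ∈ s, z p * exp (ω p * t * I)‖ ^ 2 : ℝ) : ℂ)
      = ∑ q ∈ s ×ˢ s, z q.1 * conj (z q.2) * exp (↑(ω q.1 - ω q.2) * t * I) := by
  push_cast
  rw [← mul_conj', map_sum, Finset.sum_mul_sum, Finset.sum_product]
  refine Finset.sum_congr rfl fun p _ => Finset.sum_congr rfl fun q _ => ?_
  rw [map_mul, ← exp_conj, mul_mul_mul_comm, ← exp_add]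
  congr 2
  simp only [map_mul, conj_ofReal, conj_I]
  ring

theorem tendsto_average_norm_sq_sum_exp {ι : Type*} (s : Finset ι) (z : ι → ℂ) (ω : ι → ℝ)
    (hω : Set.InjOn ω s) :
    Tendsto (fun τ : ℝ => 1 / τ * ∫ t in (0:ℝ)..τ, ‖∑ p ∈ s, z p * exp (ω p * t * I)‖ ^ 2)
      atTop (𝓝 (∑ p ∈ s, ‖z p‖ ^ 2)) := by
  have hdiag : (s ×ˢ s).filter (fun q => ω q.1 - ω q.2 = 0) = s.diag := by
    ext ⟨p, q⟩
    simp only [Finset.mem_filter, Finset.mem_product, Finset.mem_diag, sub_eq_zero]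
    exact ⟨fun ⟨⟨hp, hq⟩, h⟩ => ⟨hp, hω hp hq h⟩, by rintro ⟨hp, rfl⟩; exact ⟨⟨hp, hp⟩, rfl⟩⟩
  have key := (continuous_re.tendsto _).comp
    (tendsto_average_sum_exp (s ×ˢ s) (fun q => z q.1 * conj (z q.2)) fun q => ω q.1 - ω q.2)
  rw [hdiag, Finset.sum_diag] at key
  simp_rw [mul_conj', ← ofReal_pow, ← ofReal_sum, ofReal_re] at key
  refine key.congr fun τ => ?_
  simp only [Function.comp_apply, ← ofReal_norm_sq_sum_exp, intervalIntegral.integral_ofReal]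
  simp [one_div]

namespace Matrix

section CommRing

variable {n R : Type*} [Fintype n] [CommRing R]

theorem mul_diagonal_of_mulVec_eq_smul [DecidableEq n] {H : Matrix n n R} {v : n → n → R}
    {E : n → R} (heig : ∀ j, H *ᵥ v j = E j • v j) :
    H * (of v)ᵀ = (of v)ᵀ * diagonal E := by
  ext i j
  rw [mul_diagonal]
  simpa [mulVec, dotProduct, mul_apply, mul_comm] using congrFun (heig j) i

variable [StarRing R]

theorem star_mulVec_dotProduct_mulVec_mulVec (U B : Matrix n n R) (a : n → R) :
    star (U *ᵥ a) ⬝ᵥ (B *ᵥ (U *ᵥ a)) = star a ⬝ᵥ ((star U * B * U) *ᵥ a) := by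
  rw [star_mulVec, ← dotProduct_mulVec, mulVec_mulVec, mulVec_mulVec, star_eq_conjTranspose]

theorem mem_unitaryGroup_of_orthonormal [DecidableEq n] {v : n → n → R}
    (horth : ∀ i j, star (v i) ⬝ᵥ v j = if i = j then 1 else 0) :
    (of v)ᵀ ∈ unitaryGroup n R := by
  rw [mem_unitaryGroup_iff']
  ext i j
  rw [mul_apply, one_apply, ← horth i j]
  simp [dotProduct, mul_comm]

theorem star_transpose_of_mul_mul_apply (v : n → n → R) (B : Matrix n n R) (j k : n) :
    (star (of v)ᵀ * B * (of v)ᵀ) j k = star (v j) ⬝ᵥ (B *ᵥ v k) := by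
  simp only [mul_apply, mulVec, dotProduct, sum_mul, mul_sum, mul_assoc, star_apply,
    transpose_apply, of_apply, Pi.star_apply]
  exact sum_comm

theorem eq_mul_diagonal_mul_star [DecidableEq n] {H U : Matrix n n R} {E : n → R}
    (hU : U ∈ unitaryGroup n R) (hHU : H * U = U * diagonal E) :
    H = U * diagonal E * star U := by
  rw [← hHU, Matrix.mul_assoc, mem_unitaryGroup_iff.mp hU, Matrix.mul_one]

open Polynomial in
theorem charpoly_roots_mul_diagonal_mul_star [DecidableEq n] [IsDomain R] {U : Matrix n n R}
    (E : n → R) (hU : U ∈ unitaryGroup n R) :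
    (U * diagonal E * star U).charpoly.roots = univ.val.map E := by
  rw [charpoly_mul_comm, ← Matrix.mul_assoc, mem_unitaryGroup_iff'.mp hU, Matrix.one_mul,
    charpoly_diagonal]
  simpa [Multiset.map_map, Function.comp_def] using roots_multiset_prod_X_sub_C (univ.val.map E)

end CommRing

variable {n : Type*} [Fintype n] [DecidableEq n]

theorem exp_smul_mul_diagonal_mul_star {U : Matrix n n ℂ} (E : n → ℂ)
    (hU : U ∈ unitaryGroup n ℂ) (s : ℂ) :
    NormedSpace.exp (s • (U * diagonal E * star U))
      = U * diagonal (fun j => Complex.exp (s * E j)) * star U := by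
  have hinv : U⁻¹ = star U := inv_eq_left_inv (mem_unitaryGroup_iff'.mp hU)
  have hunit : IsUnit U := .of_mul_eq_one _ (mem_unitaryGroup_iff.mp hU)
  rw [← hinv, ← smul_mul_assoc, ← mul_smul_comm, exp_conj _ _ hunit, ← diagonal_smul,
    exp_diagonal, Pi.exp_def, Complex.exp_eq_exp_ℂ]
  rfl

theorem star_dotProduct_mulVec_phases_sub_diag (M : Matrix n n ℂ) (c : n → ℂ) (E : n → ℝ)
    (t : ℝ) :
    star (fun j => exp (-(t : ℂ) * I * E j) * c j) ⬝ᵥ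
        (M *ᵥ fun j => exp (-(t : ℂ) * I * E j) * c j)
      - ∑ j, ((‖c j‖ ^ 2 : ℝ) : ℂ) * M j j
      = ∑ p ∈ univ.offDiag,
          conj (c p.1) * c p.2 * M p.1 p.2 * exp (↑(E p.1 - E p.2) * t * I) := by
  have hphase (j k : n) :
      star (exp (-(t : ℂ) * I * E j) * c j) * (M j k * (exp (-(t : ℂ) * I * E k) * c k))
        = conj (c j) * c k * M j k * exp (↑(E j - E k) * t * I) := by
    rw [star_mul', star_def, ← Complex.exp_conj]
    calc _ = conj (c j) * c k * M j k *
          (exp (conj (-(t : ℂ) * I * E j)) * exp (-(t : ℂ) * I * E k)) := by ring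
      _ = _ := by
        rw [← exp_add]
        simp only [map_mul, map_neg, conj_ofReal, conj_I]
        push_cast
        ring_nf
  simp only [dotProduct, mulVec, Pi.star_apply, mul_sum, hphase]
  rw [← sum_product', ← diag_union_offDiag, sum_union (disjoint_diag_offDiag _), sum_diag]
  simp [conj_mul']

section L2OpNorm

open scoped Matrix.Norms.L2Operator

theorem sum_norm_sq_apply_le_opNorm_sq (A : Matrix n n ℂ) (k : n) :
    ∑ j, ‖A j k‖ ^ 2 ≤ opNorm A ^ 2 := by
  have h := l2_opNorm_mulVec A (EuclideanSpace.single k 1)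
  rw [PiLp.norm_single, norm_one, mul_one] at h
  calc ∑ j, ‖A j k‖ ^ 2 = ‖(EuclideanSpace.equiv n ℂ).symm (A *ᵥ Pi.single k 1)‖ ^ 2 := by
        rw [EuclideanSpace.norm_sq_eq]; simp
    _ ≤ opNorm A ^ 2 := by gcongr; exact h

theorem sum_norm_sq_apply_le_opNorm_sq' (A : Matrix n n ℂ) (j : n) :
    ∑ k, ‖A j k‖ ^ 2 ≤ opNorm A ^ 2 := by
  simpa [opNorm, ← cstar_norm_def, l2_opNorm_conjTranspose] using
    sum_norm_sq_apply_le_opNorm_sq Aᴴ j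

theorem opNorm_star_mul_mul {U : Matrix n n ℂ} (hU : U ∈ unitaryGroup n ℂ) (B : Matrix n n ℂ) :
    opNorm (star U * B * U) = opNorm B := by
  simp only [opNorm, ← cstar_norm_def]
  rw [CStarRing.norm_mul_mem_unitary _ hU, CStarRing.norm_mem_unitary_mul _ (Unitary.star_mem hU)]

end L2OpNorm

theorem sum_mul_mul_norm_sq_le (A : Matrix n n ℂ) (w : n → ℝ) :
    ∑ j, ∑ k, w j * w k * ‖A j k‖ ^ 2 ≤ opNorm A ^ 2 * ∑ j, w j ^ 2 := by
  have hamgm (j k : n) : w j * w k * ‖A j k‖ ^ 2 ≤ (w j ^ 2 + w k ^ 2) / 2 * ‖A j k‖ ^ 2 := by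
    gcongr
    nlinarith [sq_nonneg (w j - w k)]
  have hrows : ∑ j, ∑ k, w j ^ 2 * ‖A j k‖ ^ 2 ≤ (∑ j, w j ^ 2) * opNorm A ^ 2 := by
    rw [sum_mul]
    exact sum_le_sum fun j _ => by
      rw [← mul_sum]; gcongr; exact sum_norm_sq_apply_le_opNorm_sq' A j
  have hcols : ∑ j, ∑ k, w k ^ 2 * ‖A j k‖ ^ 2 ≤ (∑ k, w k ^ 2) * opNorm A ^ 2 := by
    rw [sum_comm, sum_mul]
    exact sum_le_sum fun k _ => by
      rw [← mul_sum]; gcongr; exact sum_norm_sq_apply_le_opNorm_sq A k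
  calc ∑ j, ∑ k, w j * w k * ‖A j k‖ ^ 2
      ≤ ∑ j, ∑ k, (w j ^ 2 + w k ^ 2) / 2 * ‖A j k‖ ^ 2 :=
        sum_le_sum fun j _ => sum_le_sum fun k _ => hamgm j k
    _ = ((∑ j, ∑ k, w j ^ 2 * ‖A j k‖ ^ 2) + ∑ j, ∑ k, w k ^ 2 * ‖A j k‖ ^ 2) / 2 := by
        simp only [add_div, add_mul, sum_add_distrib, sum_div, div_mul_eq_mul_div]
    _ ≤ opNorm A ^ 2 * ∑ j, w j ^ 2 := by linarith

section OrthonormalEigenbasis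

variable {H : Matrix n n ℂ} {E : n → ℝ} {v : n → n → ℂ}

theorem eq_mul_diagonal_mul_star_of_orthonormal
    (horth : ∀ i j, star (v i) ⬝ᵥ v j = if i = j then 1 else 0)
    (heig : ∀ j, H *ᵥ v j = (E j : ℂ) • v j) :
    H = (of v)ᵀ * diagonal (fun j => (E j : ℂ)) * star (of v)ᵀ :=
  eq_mul_diagonal_mul_star (mem_unitaryGroup_of_orthonormal horth)
    (mul_diagonal_of_mulVec_eq_smul heig)

theorem charpoly_roots_of_orthonormal
    (horth : ∀ i j, star (v i) ⬝ᵥ v j = if i = j then 1 else 0)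
    (heig : ∀ j, H *ᵥ v j = (E j : ℂ) • v j) :
    H.charpoly.roots = univ.val.map fun j => (E j : ℂ) := by
  rw [eq_mul_diagonal_mul_star_of_orthonormal horth heig,
    charpoly_roots_mul_diagonal_mul_star _ (mem_unitaryGroup_of_orthonormal horth)]

theorem expectation_exp_sub_eq_sum_offDiag
    (horth : ∀ i j, star (v i) ⬝ᵥ v j = if i = j then 1 else 0)
    (heig : ∀ j, H *ᵥ v j = (E j : ℂ) • v j) (φ : n → ℂ) (B : Matrix n n ℂ) (t : ℝ) :
    star (NormedSpace.exp ((-(t : ℂ) * I) • H) *ᵥ φ) ⬝ᵥ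
          (B *ᵥ (NormedSpace.exp ((-(t : ℂ) * I) • H) *ᵥ φ))
        - ∑ j, ((‖star (v j) ⬝ᵥ φ‖ ^ 2 : ℝ) : ℂ) * (star (v j) ⬝ᵥ (B *ᵥ v j))
      = ∑ p ∈ univ.offDiag, conj (star (v p.1) ⬝ᵥ φ) * (star (v p.2) ⬝ᵥ φ) *
          (star (v p.1) ⬝ᵥ (B *ᵥ v p.2)) * exp (↑(E p.1 - E p.2) * t * I) := by
  set U : Matrix n n ℂ := (of v)ᵀ
  have hc (j : n) : star (v j) ⬝ᵥ φ = (star U *ᵥ φ) j := by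
    simp [U, mulVec, dotProduct]
  have hM (j k : n) : star (v j) ⬝ᵥ (B *ᵥ v k) = (star U * B * U) j k :=
    (star_transpose_of_mul_mul_apply v B j k).symm
  have hevolve : NormedSpace.exp ((-(t : ℂ) * I) • H) *ᵥ φ
      = U *ᵥ fun j => exp (-(t : ℂ) * I * E j) * (star U *ᵥ φ) j := by
    rw [eq_mul_diagonal_mul_star_of_orthonormal horth heig,
      exp_smul_mul_diagonal_mul_star _ (mem_unitaryGroup_of_orthonormal horth),
      ← mulVec_mulVec, ← mulVec_mulVec]
    exact congrArg _ (funext (mulVec_diagonal _ _))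
  rw [hevolve, star_mulVec_dotProduct_mulVec_mulVec]
  simp only [hc, hM]
  exact star_dotProduct_mulVec_phases_sub_diag _ _ E t

theorem sum_offDiag_norm_sq_le
    (horth : ∀ i j, star (v i) ⬝ᵥ v j = if i = j then 1 else 0) (φ : n → ℂ)
    (B : Matrix n n ℂ) :
    ∑ p ∈ univ.offDiag, ‖conj (star (v p.1) ⬝ᵥ φ) * (star (v p.2) ⬝ᵥ φ) *
        (star (v p.1) ⬝ᵥ (B *ᵥ v p.2))‖ ^ 2
      ≤ opNorm B ^ 2 * ∑ j, ‖star (v j) ⬝ᵥ φ‖ ^ 4 := by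
  set U : Matrix n n ℂ := (of v)ᵀ
  have hU : U ∈ unitaryGroup n ℂ := mem_unitaryGroup_of_orthonormal horth
  have hM (j k : n) : star (v j) ⬝ᵥ (B *ᵥ v k) = (star U * B * U) j k :=
    (star_transpose_of_mul_mul_apply v B j k).symm
  calc _ ≤ ∑ p : n × n, ‖conj (star (v p.1) ⬝ᵥ φ) * (star (v p.2) ⬝ᵥ φ) *
          (star (v p.1) ⬝ᵥ (B *ᵥ v p.2))‖ ^ 2 :=
        sum_le_sum_of_subset_of_nonneg (subset_univ _) fun _ _ _ => by positivity
    _ = ∑ j, ∑ k, ‖star (v j) ⬝ᵥ φ‖ ^ 2 * ‖star (v k) ⬝ᵥ φ‖ ^ 2 * ‖(star U * B * U) j k‖ ^ 2 := by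
        rw [← univ_product_univ, sum_product]
        simp [hM, mul_pow]
    _ ≤ opNorm (star U * B * U) ^ 2 * ∑ j, (‖star (v j) ⬝ᵥ φ‖ ^ 2) ^ 2 :=
        sum_mul_mul_norm_sq_le _ _
    _ = opNorm B ^ 2 * ∑ j, ‖star (v j) ⬝ᵥ φ‖ ^ 4 := by
        rw [opNorm_star_mul_mul hU]
        simp [← pow_mul]

end OrthonormalEigenbasis

end Matrix

theorem NondegGaps.injOn_sub {n : Type*} [Fintype n] [DecidableEq n] {H : Matrix n n ℂ}
    {E : n → ℝ} (hgap : NondegGaps H)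
    (hroots : H.charpoly.roots = univ.val.map fun j => (E j : ℂ)) :
    Set.InjOn (fun p : n × n => E p.1 - E p.2) (univ.offDiag : Finset (n × n)) := by
  have hinj : Function.Injective fun j => (E j : ℂ) := by
    have h := hgap.1
    rw [hroots] at h
    exact fun j k hjk => Multiset.inj_on_of_nodup_map h j (by simp) k (by simp) hjk
  have hmem (j : n) : (E j : ℂ) ∈ H.charpoly.roots := by simp [hroots]
  rintro ⟨j, k⟩ hjk ⟨j', k'⟩ hjk' heq
  simp only [coe_offDiag, Set.mem_offDiag, Set.mem_univ, true_and, Finset.coe_univ] at hjk hjk'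
  obtain ⟨h1, h2⟩ := hgap.2 _ (hmem j) _ (hmem k) _ (hmem j') _ (hmem k')
    (hinj.ne hjk) (hinj.ne hjk') (by exact_mod_cast heq)
  exact Prod.ext (hinj h1) (hinj h2)

theorem fluctuation_bound_general (D : ℕ) (H : Matrix (Fin D) (Fin D) ℂ)
    (hgap : NondegGaps H) (E : Fin D → ℝ) (v : Fin D → (Fin D → ℂ))
    (horth : ∀ i j, star (v i) ⬝ᵥ v j = if i = j then (1 : ℂ) else 0)
    (heig : ∀ j, H *ᵥ v j = (E j : ℂ) • v j)
    (φ : Fin D → ℂ) (B : Matrix (Fin D) (Fin D) ℂ) :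
    ∃ Δ : ℝ,
      Filter.Tendsto (fun τ : ℝ => (1 / τ) * ∫ t in (0:ℝ)..τ,
          ‖(star (NormedSpace.exp ((-(t : ℂ) * Complex.I) • H) *ᵥ φ)) ⬝ᵥ
              (B *ᵥ (NormedSpace.exp ((-(t : ℂ) * Complex.I) • H) *ᵥ φ))
            - ∑ j, ((‖star (v j) ⬝ᵥ φ‖ ^ 2 : ℝ) : ℂ) *
                (star (v j) ⬝ᵥ (B *ᵥ v j))‖ ^ 2)
        Filter.atTop (nhds Δ) ∧
      Δ ≤ opNorm B ^ 2 / (∑ j, ‖star (v j) ⬝ᵥ φ‖ ^ 4)⁻¹ := by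
  refine ⟨∑ p ∈ univ.offDiag, ‖conj (star (v p.1) ⬝ᵥ φ) * (star (v p.2) ⬝ᵥ φ) *
      (star (v p.1) ⬝ᵥ (B *ᵥ v p.2))‖ ^ 2, ?_, ?_⟩
  · simp_rw [expectation_exp_sub_eq_sum_offDiag horth heig]
    exact tendsto_average_norm_sq_sum_exp _ _ _
      (hgap.injOn_sub (charpoly_roots_of_orthonormal horth heig))
  · rw [div_inv_eq_mul]
    exact sum_offDiag_norm_sq_le horth φ B

/-- Equilibration of expectation values: the time-averaged fluctuation of
`⟨φ(t)|B|φ(t)⟩` around `B̄` exists and is at most `‖B‖²/D_eff`. -/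
theorem fluctuation_bound (D : ℕ) (H : Matrix (Fin D) (Fin D) ℂ) (hH : H.IsHermitian)
    (hgap : NondegGaps H) (E : Fin D → ℝ) (v : Fin D → (Fin D → ℂ))
    (horth : ∀ i j, star (v i) ⬝ᵥ v j = if i = j then (1 : ℂ) else 0)
    (heig : ∀ j, H *ᵥ v j = (E j : ℂ) • v j)
    (φ : Fin D → ℂ) (hφ : star φ ⬝ᵥ φ = 1) (B : Matrix (Fin D) (Fin D) ℂ) :
    ∃ Δ : ℝ,
      Filter.Tendsto (fun τ : ℝ => (1 / τ) * ∫ t in (0:ℝ)..τ,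
          ‖(star (NormedSpace.exp ((-(t : ℂ) * Complex.I) • H) *ᵥ φ)) ⬝ᵥ
              (B *ᵥ (NormedSpace.exp ((-(t : ℂ) * Complex.I) • H) *ᵥ φ))
            - ∑ j, ((‖star (v j) ⬝ᵥ φ‖ ^ 2 : ℝ) : ℂ) *
                (star (v j) ⬝ᵥ (B *ᵥ v j))‖ ^ 2)
        Filter.atTop (nhds Δ) ∧
      Δ ≤ opNorm B ^ 2 / (∑ j, ‖star (v j) ⬝ᵥ φ‖ ^ 4)⁻¹ :=
  fluctuation_bound_general D H hgap E v horth heig φ B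

end
end

section
/- Fix a constant ν ∈ (0, 1/2]. There exist constants C > 0 and N₀ such that for every even integer N ≥ N₀ and every odd integer n with |n − νN| ≤ 1, the following holds: | binom(N,n)^{−1} · Σ_{j=0}^{(n−1)/2} (n/2 − j) · binom(N/2, j) · binom(N/2, n−j) − √( n(N−n) / (8πN) ) | ≤ C/√N. In other words, binom(N,n)^{−1} Σ_{j=0}^{(n−1)/2} (n/2 − j) binom(N/2, j) binom(N/2, n−j) = √(ν(1−ν)N/(8π)) + O(1/√N) as N → ∞ with n/N → ν. -/
open Finset
open scoped Classical

noncomputable section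

/-!
For `N = 2M` and `n = 2k + 1` the sum telescopes: `(n - 2j) C(M, j) C(M, n - j)` is `M` times
the difference of consecutive terms of `j ↦ C(M - 1, j) C(M - 1, n - 1 - j)`. Dividing by
`C(N, n)` gives, exactly, `(2k+1)(2b+1) / (4(2M-1)) · c_k c_b / c_{k+b}` with `b = M - 1 - k`
and `c_m` the central binomial coefficient. Wallis' product brackets `c_m²` between
`16^m / (π(m + 1/2))` and `16^m / (π m)`, so the square of this closed form is `n(N - n)/(8πN)`
up to a relative error `O(1/(νN))`; as `√(n(N - n)/(8πN)) = O(√N)`, the error is `O(1/√N)`.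
-/

open scoped Nat
open Real

theorem Nat.cast_centralBinom (K : Type*) [DivisionRing K] [CharZero K] (n : ℕ) :
    (n.centralBinom : K) = (2 * n)! / (n ! * n !) := by
  rw [centralBinom_eq_two_mul_choose, cast_choose K (by omega), show 2 * n - n = n by omega]

theorem Real.Wallis.W_mul_centralBinom_sq (n : ℕ) :
    W n * (2 * n + 1) * (n.centralBinom : ℝ) ^ 2 = 16 ^ n := by
  rw [W_eq_factorial_ratio, Nat.cast_centralBinom]
  field_simp
  rw [pow_mul]
  norm_num

theorem abs_sub_le_mul_of_sq_bounds {E T δ : ℝ} (hE : 0 ≤ E) (hT : 0 < T)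
    (hlow : T ^ 2 * (1 - δ) ≤ E ^ 2) (hup : E ^ 2 ≤ T ^ 2 * (1 + δ)) : |E - T| ≤ δ * T := by
  refine le_of_mul_le_mul_right ?_ hT
  calc |E - T| * T ≤ |E - T| * (E + T) := by gcongr; linarith
    _ = |E ^ 2 - T ^ 2| := by rw [← abs_of_pos (by linarith : 0 < E + T), ← abs_mul]; ring_nf
    _ ≤ δ * T * T := abs_le.2 ⟨by linarith, by linarith⟩

namespace Nat

theorem sixteen_pow_le_pi_mul_centralBinom_sq (n : ℕ) :
    (16 : ℝ) ^ n ≤ π * (n + 1 / 2) * (n.centralBinom : ℝ) ^ 2 := by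
  rw [← Wallis.W_mul_centralBinom_sq]
  have := mul_le_mul_of_nonneg_right (Wallis.W_le n)
    (by positivity : (0 : ℝ) ≤ (2 * n + 1) * (n.centralBinom : ℝ) ^ 2)
  linarith

theorem pi_mul_centralBinom_sq_le_sixteen_pow (n : ℕ) :
    π * n * (n.centralBinom : ℝ) ^ 2 ≤ 16 ^ n := by
  rw [← Wallis.W_mul_centralBinom_sq]
  have hW := Wallis.le_W n
  rw [div_mul_eq_mul_div, div_le_iff₀ (by positivity)] at hW
  have hπW : π * n ≤ Wallis.W n * (2 * n + 1) := by
    refine le_of_mul_le_mul_right ?_ (by positivity : (0 : ℝ) < 2 * n + 2)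
    nlinarith [mul_le_mul_of_nonneg_left hW (by positivity : (0 : ℝ) ≤ 2 * n + 1), pi_pos]
  exact mul_le_mul_of_nonneg_right hπW (by positivity)

def centralBinomRatio (k b : ℕ) : ℝ :=
  k.centralBinom * b.centralBinom / (k + b).centralBinom

theorem pi_mul_mul_centralBinomRatio_sq_le (k b : ℕ) :
    π * k * b * centralBinomRatio k b ^ 2 ≤ k + b + 1 / 2 := by
  have hc : (0 : ℝ) < (k + b).centralBinom := by exact_mod_cast (k + b).centralBinom_pos
  have hkb := sixteen_pow_le_pi_mul_centralBinom_sq (k + b)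
  push_cast at hkb
  rw [centralBinomRatio, div_pow, mul_div_assoc', div_le_iff₀ (by positivity)]
  refine le_of_mul_le_mul_left ?_ pi_pos
  calc π * (π * k * b * (k.centralBinom * b.centralBinom : ℝ) ^ 2)
      = (π * k * (k.centralBinom : ℝ) ^ 2) * (π * b * (b.centralBinom : ℝ) ^ 2) := by ring
    _ ≤ 16 ^ k * 16 ^ b := by
      gcongr
      exacts [pi_mul_centralBinom_sq_le_sixteen_pow k, pi_mul_centralBinom_sq_le_sixteen_pow b]
    _ ≤ π * ((k + b + 1 / 2) * ((k + b).centralBinom : ℝ) ^ 2) := by rw [← pow_add]; linarith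

theorem le_pi_mul_mul_centralBinomRatio_sq (k b : ℕ) :
    (k + b : ℝ) ≤ π * (k + 1 / 2) * (b + 1 / 2) * centralBinomRatio k b ^ 2 := by
  have hc : (0 : ℝ) < (k + b).centralBinom := by exact_mod_cast (k + b).centralBinom_pos
  have hkb := pi_mul_centralBinom_sq_le_sixteen_pow (k + b)
  push_cast at hkb
  rw [centralBinomRatio, div_pow, mul_div_assoc', le_div_iff₀ (by positivity)]
  refine le_of_mul_le_mul_left ?_ pi_pos
  calc π * ((k + b) * ((k + b).centralBinom : ℝ) ^ 2) ≤ 16 ^ k * 16 ^ b := by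
        rw [← pow_add]; linarith
    _ ≤ (π * (k + 1 / 2) * (k.centralBinom : ℝ) ^ 2) *
          (π * (b + 1 / 2) * (b.centralBinom : ℝ) ^ 2) := by
      gcongr
      exacts [sixteen_pow_le_pi_mul_centralBinom_sq k, sixteen_pow_le_pi_mul_centralBinom_sq b]
    _ = π * (π * (k + 1 / 2) * (b + 1 / 2) * (k.centralBinom * b.centralBinom : ℝ) ^ 2) := by
      ring

/-- Written with `n = K + r + 1`, so that `n - 1 - K = r` needs no truncated subtraction. -/
theorem sum_range_sub_two_mul_mul_choose_mul_choose {R : Type*} [CommRing R] (m K r : ℕ) :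
    ∑ j ∈ range (K + 1),
        (((K + r + 1 : ℕ) : R) - 2 * j) * (m + 1).choose j * (m + 1).choose (K + r + 1 - j) =
      (m + 1) * m.choose K * m.choose r := by
  have absorb (i : ℕ) : (m + 1 : R) * m.choose i = (i + 1) * (m + 1).choose (i + 1) := by
    have := congrArg (Nat.cast : ℕ → R) (add_one_mul_choose_eq m i)
    push_cast at this
    linear_combination this
  have pascal (i : ℕ) : ((m + 1).choose (i + 1) : R) = m.choose i + m.choose (i + 1) := by
    rw [choose_succ_succ', cast_add]
  induction K generalizing r with
  | zero =>
    simp only [zero_add, sum_range_one, cast_zero, mul_zero, sub_zero, choose_zero_right,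
      cast_one, mul_one, Nat.sub_zero]
    push_cast
    linear_combination -absorb r
  | succ K ih =>
    rw [sum_range_succ, show K + 1 + r + 1 = K + (r + 1) + 1 by omega, ih,
      show K + (r + 1) + 1 - (K + 1) = r + 1 by omega]
    have hK := absorb K
    have hr := absorb r
    rw [pascal] at hr hK ⊢
    rw [pascal]
    push_cast
    linear_combination (m.choose r + m.choose (r + 1) : R) * hK -
      (m.choose K + m.choose (K + 1) : R) * hr

theorem choose_inv_mul_half_mul_choose_sq (k b : ℕ) :
    ((2 * (k + b + 1)).choose (2 * k + 1) : ℝ)⁻¹ * ((k + b + 1) / 2 * ((k + b).choose k : ℝ) ^ 2) =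
      (2 * k + 1) * (2 * b + 1) / (4 * (2 * (k + b) + 1)) * centralBinomRatio k b := by
  rw [centralBinomRatio, cast_choose ℝ (by omega : 2 * k + 1 ≤ 2 * (k + b + 1)),
    show 2 * (k + b + 1) - (2 * k + 1) = 2 * b + 1 by omega,
    cast_choose ℝ (le_add_right k b), Nat.add_sub_cancel_left,
    cast_centralBinom, cast_centralBinom, cast_centralBinom,
    show 2 * (k + b + 1) = 2 * (k + b) + 1 + 1 by ring]
  simp only [factorial_succ]
  push_cast
  field_simp
  ring

theorem half_weighted_sum_div_choose_eq (k b : ℕ) :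
    ((2 * (k + b + 1)).choose (2 * k + 1) : ℝ)⁻¹ *
        ∑ j ∈ range (k + 1), (((2 * k + 1 : ℕ) : ℝ) / 2 - j) * ((k + b + 1).choose j : ℝ) *
          ((k + b + 1).choose (2 * k + 1 - j) : ℝ) =
      (2 * k + 1) * (2 * b + 1) / (4 * (2 * (k + b) + 1)) * centralBinomRatio k b := by
  have htele := sum_range_sub_two_mul_mul_choose_mul_choose (R := ℝ) (k + b) k k
  rw [show k + k + 1 = 2 * k + 1 by ring] at htele
  push_cast at htele
  rw [← choose_inv_mul_half_mul_choose_sq,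
    show ((k + b + 1) / 2 * ((k + b).choose k : ℝ) ^ 2 : ℝ) =
      1 / 2 * ((k + b + 1) * (k + b).choose k * (k + b).choose k) by ring,
    ← htele]
  push_cast
  congr 1
  rw [mul_sum]
  exact sum_congr rfl fun j _ => by ring

theorem sq_mul_centralBinomRatio_le {k b : ℕ} (hk : k ≠ 0) (hb : b ≠ 0) :
    ((2 * k + 1) * (2 * b + 1) / (4 * (2 * (k + b) + 1)) * centralBinomRatio k b) ^ 2 ≤
      (2 * k + 1) * (2 * b + 1) / (16 * π * (k + b + 1)) *
        ((2 * k + 1) * (2 * b + 1) * (2 * (k + b) + 2) /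
          (2 * k * (2 * b) * (2 * (k + b) + 1))) := by
  have hR : centralBinomRatio k b ^ 2 ≤ (k + b + 1 / 2) / (π * k * b) := by
    rw [le_div_iff₀ (by positivity), mul_comm]
    exact pi_mul_mul_centralBinomRatio_sq_le k b
  calc _ = ((2 * k + 1) * (2 * b + 1)) ^ 2 / (16 * (2 * (k + b) + 1) ^ 2) *
        centralBinomRatio k b ^ 2 := by simp only [mul_pow, div_pow]; ring
    _ ≤ ((2 * k + 1) * (2 * b + 1)) ^ 2 / (16 * (2 * (k + b) + 1) ^ 2) *
        ((k + b + 1 / 2) / (π * k * b)) := by gcongr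
    _ = _ := by field_simp

theorem le_sq_mul_centralBinomRatio (k b : ℕ) :
    (2 * k + 1) * (2 * b + 1) / (16 * π * (k + b + 1)) * (1 - 1 / (2 * (k + b) + 1) ^ 2) ≤
      ((2 * k + 1) * (2 * b + 1) / (4 * (2 * (k + b) + 1)) * centralBinomRatio k b) ^ 2 := by
  have hR : 4 * (k + b) / (π * ((2 * k + 1) * (2 * b + 1))) ≤ centralBinomRatio k b ^ 2 := by
    rw [div_le_iff₀ (by positivity)]
    nlinarith [le_pi_mul_mul_centralBinomRatio_sq k b]
  calc _ = ((2 * k + 1) * (2 * b + 1)) ^ 2 / (16 * (2 * (k + b) + 1) ^ 2) *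
        (4 * (k + b) / (π * ((2 * k + 1) * (2 * b + 1)))) := by field_simp; ring
    _ ≤ ((2 * k + 1) * (2 * b + 1)) ^ 2 / (16 * (2 * (k + b) + 1) ^ 2) *
        centralBinomRatio k b ^ 2 := by gcongr
    _ = _ := by simp only [mul_pow, div_pow]; ring

theorem abs_mul_centralBinomRatio_sub_sqrt_le {k b : ℕ} {ε : ℝ} (hk : 1 ≤ 2 * k * ε)
    (hb : 1 ≤ 2 * b * ε) (hε : ε ≤ 1) :
    |(2 * k + 1) * (2 * b + 1) / (4 * (2 * (k + b) + 1)) * centralBinomRatio k b -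
      √((2 * k + 1) * (2 * b + 1) / (16 * π * (k + b + 1)))| ≤
      7 * ε * √((2 * k + 1) * (2 * b + 1) / (16 * π * (k + b + 1))) := by
  have hε0 : 0 < ε := by nlinarith
  have hk0 : (0 : ℝ) < k := by nlinarith
  have hb0 : (0 : ℝ) < b := by nlinarith
  have hw : 1 ≤ (2 * (k + b) + 1) * ε := by nlinarith
  have hR : 0 ≤ centralBinomRatio k b := by unfold centralBinomRatio; positivity
  apply abs_sub_le_mul_of_sq_bounds (by positivity) (by positivity)
  · rw [sq_sqrt (by positivity)]
    refine le_trans ?_ (le_sq_mul_centralBinomRatio k b)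
    gcongr
    rw [div_le_iff₀ (by positivity)]
    nlinarith
  · rw [sq_sqrt (by positivity)]
    refine (sq_mul_centralBinomRatio_le (Nat.cast_pos.1 hk0).ne' (Nat.cast_pos.1 hb0).ne').trans ?_
    gcongr
    rw [div_le_iff₀ (by positivity)]
    calc (2 * k + 1) * (2 * b + 1) * (2 * (k + b) + 2 : ℝ)
        ≤ (2 * k * (1 + ε)) * (2 * b * (1 + ε)) * ((2 * (k + b) + 1) * (1 + ε)) := by
          gcongr <;> linarith
      _ = (1 + ε) ^ 3 * (2 * k * (2 * b) * (2 * (k + b) + 1)) := by ring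
      _ ≤ (1 + 7 * ε) * (2 * k * (2 * b) * (2 * (k + b) + 1)) := by
          gcongr
          nlinarith [mul_le_mul_of_nonneg_left hε hε0.le]

theorem abs_mul_centralBinomRatio_sub_sqrt_le_div_sqrt {ν : ℝ} {k b : ℕ} (hν : ν ≤ 1 / 2)
    (hνM : 2 ≤ ν * (k + b + 1)) (hdev : |2 * k + 1 - ν * (2 * (k + b + 1))| ≤ 1) :
    |(2 * k + 1) * (2 * b + 1) / (4 * (2 * (k + b) + 1)) * centralBinomRatio k b -
      √((2 * k + 1) * (2 * b + 1) / (16 * π * (k + b + 1)))| ≤ 4 / ν / √(2 * (k + b + 1)) := by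
  have hM : 0 < ν * (k + b + 1) := by linarith
  have hν0 : 0 < ν := pos_of_mul_pos_left hM (by positivity)
  obtain ⟨hdev_low, hdev_up⟩ := abs_le.1 hdev
  set ε := (ν * (k + b + 1))⁻¹ with hε
  have hkε : 1 ≤ 2 * k * ε := by rw [hε, ← div_eq_mul_inv, le_div_iff₀ hM]; linarith
  have hbε : 1 ≤ 2 * b * ε := by rw [hε, ← div_eq_mul_inv, le_div_iff₀ hM]; nlinarith
  have hε1 : ε ≤ 1 := inv_le_one_of_one_le₀ (by linarith)
  have hT : √((2 * k + 1) * (2 * b + 1) / (16 * π * (k + b + 1))) ≤ √(2 * (k + b + 1)) / 4 := by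
    rw [show √(2 * (k + b + 1)) / 4 = √(2 * (k + b + 1) / 4 ^ 2) by
      rw [Real.sqrt_div' _ (by norm_num), Real.sqrt_sq (by norm_num)]]
    refine Real.sqrt_le_sqrt ?_
    rw [div_le_div_iff₀ (by positivity) (by positivity)]
    nlinarith [sq_nonneg ((k : ℝ) - b), pi_gt_three,
      mul_le_mul_of_nonneg_right pi_gt_three.le (sq_nonneg ((k : ℝ) + b + 1))]
  have hεN : ε * (ν * √(2 * (k + b + 1)) ^ 2) = 2 := by
    rw [Real.sq_sqrt (by positivity), hε]
    field_simp
  calc _ ≤ 7 * ε * √((2 * k + 1) * (2 * b + 1) / (16 * π * (k + b + 1))) :=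
        abs_mul_centralBinomRatio_sub_sqrt_le hkε hbε hε1
    _ ≤ 7 * ε * (√(2 * (k + b + 1)) / 4) := by gcongr
    _ ≤ 4 / ν / √(2 * (k + b + 1)) := by
      rw [div_div, le_div_iff₀ (by positivity)]
      linear_combination (7 / 4 : ℝ) * hεN

end Nat

/-- Asymptotics of the half-weighted binomial sum appearing in the `f = 1/2`
entanglement entropy correction. -/
theorem half_weighted_binomial_sum_asymptotics (ν : ℝ) (hν : ν ∈ Set.Ioc 0 (1/2)) :
    ∃ C : ℝ, 0 < C ∧ ∃ N₀ : ℕ, ∀ N : ℕ, N₀ ≤ N → Even N →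
    ∀ n : ℕ, Odd n → |(n : ℝ) - ν * N| ≤ 1 →
    |(N.choose n : ℝ)⁻¹ * (∑ j ∈ Finset.range ((n - 1) / 2 + 1),
        ((n : ℝ) / 2 - j) * ((N / 2).choose j : ℝ) * ((N / 2).choose (n - j) : ℝ))
      - Real.sqrt ((n : ℝ) * ((N : ℝ) - n) / (8 * Real.pi * N))| ≤ C / Real.sqrt N := by
  obtain ⟨hν0, hν2⟩ := hν
  refine ⟨4 / ν, by positivity, ⌈4 / ν⌉₊, ?_⟩
  rintro N hN ⟨M, rfl⟩ n ⟨k, rfl⟩ hdev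
  have hνM : 2 ≤ ν * M := by
    have := Nat.ceil_le.1 hN
    push_cast at this
    rw [div_le_iff₀ hν0] at this
    linarith
  have hkM : k + 1 ≤ M := by
    have := (abs_le.1 hdev).2
    push_cast at this
    exact_mod_cast (show (k : ℝ) + 1 ≤ M by nlinarith)
  obtain ⟨b, rfl⟩ : ∃ b, M = k + b + 1 := ⟨M - k - 1, by omega⟩
  rw [show (k + b + 1 + (k + b + 1)) / 2 = k + b + 1 by omega,
    show (2 * k + 1 - 1) / 2 = k by omega, show k + b + 1 + (k + b + 1) = 2 * (k + b + 1) by ring,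
    Nat.half_weighted_sum_div_choose_eq] at *
  push_cast at hνM hdev ⊢
  rw [show (2 * k + 1) * (2 * (k + b + 1) - (2 * k + 1)) / (8 * π * (2 * (k + b + 1))) =
      (2 * k + 1) * (2 * b + 1) / (16 * π * (k + b + 1) : ℝ) by field_simp; ring]
  exact Nat.abs_mul_centralBinomRatio_sub_sqrt_le_div_sqrt hν2 hνM hdev

end
end
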